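/- arXiv:1911.10571 — 7 statements merged into one kernel-verified Lean document; each statement's English description precedes it below -/
import Mathlib

section
/- Assume each f_n is convex (jointly) on ℝ^T × ℝ^T, that f_n(u,·) is L₂-Lipschitz on ℝ^T for every n and u (L₂ > 0), and that Φ is α-strongly monotone on X with α > 0. Let x̂ ∈ X(A) be a VNE and x* ∈ X(A) an SVWE. Then ‖x̂ − x*‖ ≤ (L₂/α)·(1/√N). -/
open scoped RealInnerProductSpace

noncomputable section

/-- `ℝ^T`. -/
abbrev Vec (T : ℕ) := EuclideanSpace ℝ (Fin T)

/-- The subdifferential of `φ : E → ℝ` at `x`. -/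
def subdiff {E : Type*} [NormedAddCommGroup E] [InnerProductSpace ℝ E]
    (φ : E → ℝ) (x : E) : Set E :=
  {g | ∀ y, φ x + ⟪g, y - x⟫ ≤ φ y}

/-- Profiles `(ℝ^T)^N` with the norm `‖x‖² = ∑ₙ ‖xₙ‖²`. -/
abbrev Profile (N T : ℕ) := PiLp 2 (fun _ : Fin N => Vec T)

/-- Average action `x̄ = (1/N) ∑ₙ xₙ`. -/
def avg {N T : ℕ} (x : Profile N T) : Vec T := (1 / (N : ℝ)) • ∑ n, x n

/-- `x̄₋ₙ = (1/N) ∑_{m ≠ n} xₘ`. -/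
def avgOther {N T : ℕ} (x : Profile N T) (n : Fin N) : Vec T :=
  (1 / (N : ℝ)) • ∑ m ∈ Finset.univ.erase n, x m

/-- Feasible profiles satisfying the coupling constraint: `X(A)`. -/
def XA {N T : ℕ} (Xset : Fin N → Set (Vec T)) (A : Set (Vec T)) : Set (Profile N T) :=
  {x | (∀ n, x n ∈ Xset n) ∧ avg x ∈ A}

/-- `Φ(x) = ∏ₙ ∂₁fₙ(xₙ, x̄)`. -/
def Phi {N T : ℕ} (f : Fin N → Vec T → Vec T → ℝ) (x : Profile N T) : Set (Profile N T) :=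
  {g | ∀ n, g n ∈ subdiff (fun y => f n y (avg x)) (x n)}

/-- `Φ̂(x) = ∏ₙ ∂₁f̂ₙ(xₙ, x̄₋ₙ)` where `f̂ₙ(u,a) = fₙ(u, a + u/N)`. -/
def PhiHat {N T : ℕ} (f : Fin N → Vec T → Vec T → ℝ) (x : Profile N T) : Set (Profile N T) :=
  {g | ∀ n, g n ∈ subdiff (fun u => f n u (avgOther x n + (1 / (N : ℝ)) • u)) (x n)}

theorem approx_subgrad' {E : Type*} [NormedAddCommGroup E] [InnerProductSpace ℝ E]
    [CompleteSpace E] (h : E → ℝ) (hc : ConvexOn ℝ Set.univ h) (x₀ gh : E) (ε : ℝ)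
    (hε : 0 ≤ ε) (H : ∀ y, h x₀ + ⟪gh, y - x₀⟫ ≤ h y + ε * ‖y - x₀‖) :
    ∃ g, ‖g - gh‖ ≤ ε ∧ g ∈ subdiff h x₀ := by
  set Q : E → ℝ := fun y => h y - h x₀ - ⟪gh, y - x₀⟫ with hQ
  have key : ∀ (y z : E) (a b : ℝ), a + b = 1 → a • y + b • z - x₀ = a • (y - x₀) + b • (z - x₀) := by
    intro y z a b hab
    have : a • (y - x₀) + b • (z - x₀) = a • y + b • z - (a + b) • x₀ := by module
    rw [this, hab, one_smul]
  have hQconv : ConvexOn ℝ Set.univ Q := by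
    refine ⟨convex_univ, fun y _ z _ a b ha hb hab => ?_⟩
    have h1 := hc.2 (Set.mem_univ y) (Set.mem_univ z) ha hb hab
    simp only [smul_eq_mul] at h1
    simp only [hQ, smul_eq_mul]
    rw [key y z a b hab, inner_add_right, real_inner_smul_right, real_inner_smul_right]
    have hb' : b = 1 - a := by linarith
    subst hb'
    nlinarith [h1]
  have hQlb : ∀ y, -(ε * ‖y - x₀‖) ≤ Q y := by
    intro y; have := H y; simp only [hQ]; linarith
  have hQ0 : Q x₀ = 0 := by simp [hQ]
  set S : Set (E × ℝ) := {p | p.2 + ε * ‖p.1 - x₀‖ < 0} with hS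
  have hSopen : IsOpen S := by
    have : Continuous fun p : E × ℝ => p.2 + ε * ‖p.1 - x₀‖ :=
      continuous_snd.add (continuous_const.mul ((continuous_fst.sub continuous_const).norm))
    exact isOpen_lt this continuous_const
  have hSconv : Convex ℝ S := by
    intro p hp q hq a b ha hb hab
    simp only [hS, Set.mem_setOf_eq] at hp hq ⊢
    simp only [Prod.fst_add, Prod.snd_add, Prod.smul_fst, Prod.smul_snd, smul_eq_mul]
    have hn : ‖a • p.1 + b • q.1 - x₀‖ ≤ a * ‖p.1 - x₀‖ + b * ‖q.1 - x₀‖ := by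
      rw [key p.1 q.1 a b hab]
      calc ‖a • (p.1 - x₀) + b • (q.1 - x₀)‖ ≤ ‖a • (p.1 - x₀)‖ + ‖b • (q.1 - x₀)‖ :=
            norm_add_le _ _
        _ = a * ‖p.1 - x₀‖ + b * ‖q.1 - x₀‖ := by
            rw [norm_smul, norm_smul, Real.norm_eq_abs, Real.norm_eq_abs, abs_of_nonneg ha,
              abs_of_nonneg hb]
    have hεn := mul_le_mul_of_nonneg_left hn hε
    rcases ha.eq_or_lt with h0 | ha'
    · have hb1 : b = 1 := by linarith
      rw [← h0, hb1] at *
      simp only [zero_smul, one_smul, zero_add, zero_mul, one_mul] at *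
      linarith [hq]
    · nlinarith [hεn, mul_lt_mul_of_pos_left hp ha', mul_le_mul_of_nonneg_left hq.le hb]
  have hTconv : Convex ℝ {p : E × ℝ | Q p.1 ≤ p.2} := by
    have := hQconv.convex_epigraph
    simpa using this
  have hdisj : Disjoint S {p : E × ℝ | Q p.1 ≤ p.2} := by
    rw [Set.disjoint_left]
    rintro p hp hp2
    have := hQlb p.1
    simp only [hS, Set.mem_setOf_eq] at hp hp2
    linarith
  obtain ⟨F, u, hFS, hFT⟩ := geometric_hahn_banach_open hSconv hSopen hTconv hdisj
  set c : ℝ := F (0, 1) with hcdef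
  set φ : E → ℝ := fun y => F (y, 0) with hφdef
  have hFdec : ∀ (y : E) (s : ℝ), F (y, s) = φ y + s * c := by
    intro y s
    have : (y, s) = (y, (0:ℝ)) + s • ((0:E), (1:ℝ)) := by
      simp [Prod.ext_iff]
    rw [this, map_add, map_smul, smul_eq_mul, hφdef]
  -- epigraph side : ∀ z t, Q z ≤ t → u ≤ φ z + t * c
  have e1 : ∀ z t, Q z ≤ t → u ≤ φ z + t * c := by
    intro z t hzt
    have := hFT (z, t) hzt
    rwa [hFdec] at this
  -- hypograph side : ∀ y s, s + ε * ‖y - x₀‖ < 0 → φ y + s * c < u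
  have e2 : ∀ y s, s + ε * ‖y - x₀‖ < 0 → φ y + s * c < u := by
    intro y s hys
    have := hFS (y, s) hys
    rwa [hFdec] at this
  have hc0 : 0 ≤ c := by
    by_contra hcneg
    push_neg at hcneg
    have h0 : u ≤ φ x₀ := by simpa using e1 x₀ 0 (le_of_eq hQ0)
    have ht : (0:ℝ) ≤ (u - φ x₀ - 1) / c := by
      rw [← neg_div_neg_eq]; exact div_nonneg (by linarith) (by linarith)
    have := e1 x₀ ((u - φ x₀ - 1) / c) (by rw [hQ0]; exact ht)
    rw [div_mul_cancel₀ _ (ne_of_lt hcneg)] at this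
    linarith
  have hcpos : 0 < c := by
    rcases hc0.eq_or_lt with h0 | h; swap; · exact h
    exfalso
    have h1 : φ x₀ < u := by
      have := e2 x₀ (-ε * ‖x₀ - x₀‖ - 1) (by nlinarith [norm_nonneg (x₀ - x₀)])
      rw [← h0] at this; linarith
    have h2 : u ≤ φ x₀ := by
      have := e1 x₀ 0 (le_of_eq hQ0); rw [← h0] at this; linarith
    linarith
  -- limit inequality from hypograph side
  have e2' : ∀ y, φ y - c * (ε * ‖y - x₀‖) ≤ u := by
    intro y
    have : ∀ δ : ℝ, 0 < δ → φ y - c * (ε * ‖y - x₀‖) ≤ u + δ * c := by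
      intro δ hδ
      have := e2 y (-(ε * ‖y - x₀‖) - δ) (by linarith)
      nlinarith [this]
    by_contra hcon
    push_neg at hcon
    have hδ : 0 < (φ y - c * (ε * ‖y - x₀‖) - u) / c / 2 := by
      have hnum : 0 < φ y - c * (ε * ‖y - x₀‖) - u := by linarith
      positivity
    have := this _ hδ
    rw [div_mul_eq_mul_div, div_mul_cancel₀ _ (ne_of_gt hcpos)] at this
    linarith
  have hux : u = φ x₀ := by
    have h1 := e1 x₀ 0 (le_of_eq hQ0)
    have h2 := e2' x₀
    simp only [sub_self, norm_zero, mul_zero, sub_zero, zero_mul, add_zero] at h1 h2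
    linarith
  -- the correction vector
  set ψ : E →L[ℝ] ℝ := (-c⁻¹) • (F.comp (ContinuousLinearMap.inl ℝ E ℝ)) with hψ
  set g' : E := (InnerProductSpace.toDual ℝ E).symm ψ with hg'
  have hg'inner : ∀ y, ⟪g', y⟫ = -(φ y) / c := by
    intro y
    rw [hg', InnerProductSpace.toDual_symm_apply]
    simp [hψ, hφdef, neg_div, div_eq_inv_mul]
  have hg'sub : ∀ y, ⟪g', y - x₀⟫ = (u - φ y) / c := by
    intro y
    have : φ (y - x₀) = φ y - φ x₀ := by
      simp only [hφdef]
      have : ((y - x₀ : E), (0:ℝ)) = (y, (0:ℝ)) - (x₀, (0:ℝ)) := by simp [Prod.ext_iff]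
      rw [this, map_sub]
    rw [hg'inner, this, hux]; ring
  have hlow : ∀ y, -(ε * ‖y - x₀‖) ≤ ⟪g', y - x₀⟫ := by
    intro y
    rw [hg'sub]
    rw [le_div_iff₀ hcpos]
    have := e2' y
    nlinarith [this]
  have hup : ∀ z, ⟪g', z - x₀⟫ ≤ Q z := by
    intro z
    rw [hg'sub, div_le_iff₀ hcpos]
    have := e1 z (Q z) le_rfl
    nlinarith [this]
  have hg'norm : ‖g'‖ ≤ ε := by
    have := hlow (x₀ - g')
    simp only [sub_sub_cancel_left, inner_neg_right, real_inner_self_eq_norm_sq, norm_neg] at this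
    rcases eq_or_lt_of_le (norm_nonneg g') with h0 | hpos
    · rw [← h0]; exact hε
    · nlinarith [this]
  refine ⟨gh + g', by simpa using hg'norm, fun y => ?_⟩
  have := hup y
  simp only [hQ] at this
  rw [inner_add_left]
  linarith

/-- if `Φ` is `α`-strongly monotone on `X`, a VNE `x̂` and an SVWE `x*`
satisfy `‖x̂ − x*‖ ≤ (L₂/α)·(1/√N)`. -/
theorem vne_close_to_svwe (N T : ℕ) (hN : 0 < N) (hT : 0 < T) (R : ℝ) (hR : 0 < R)
    (Xset : Fin N → Set (Vec T))
    (hXne : ∀ n, (Xset n).Nonempty) (hXconv : ∀ n, Convex ℝ (Xset n))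
    (hXcomp : ∀ n, IsCompact (Xset n)) (hXbd : ∀ n, ∀ x ∈ Xset n, ‖x‖ ≤ R)
    (A : Set (Vec T)) (hAne : A.Nonempty) (hAcl : IsClosed A) (hAconv : Convex ℝ A)
    (hXAne : (XA Xset A).Nonempty)
    (f : Fin N → Vec T → Vec T → ℝ)
    (hconv : ∀ n, ConvexOn ℝ Set.univ (fun p : Vec T × Vec T => f n p.1 p.2))
    (L₂ : ℝ) (hL₂ : 0 < L₂)
    (hLip : ∀ n u v w, |f n u v - f n u w| ≤ L₂ * ‖v - w‖)
    (α : ℝ) (hα : 0 < α)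
    (hmono : ∀ x y : Profile N T, (∀ n, x n ∈ Xset n) → (∀ n, y n ∈ Xset n) →
      ∀ g ∈ Phi f x, ∀ h ∈ Phi f y, α * ‖x - y‖ ^ 2 ≤ ⟪g - h, x - y⟫)
    (xhat : Profile N T) (hxhat : xhat ∈ XA Xset A)
    (ghat : Profile N T) (hghat : ghat ∈ PhiHat f xhat)
    (hVNE : ∀ x ∈ XA Xset A, 0 ≤ ⟪ghat, x - xhat⟫)
    (xstar : Profile N T) (hxstar : xstar ∈ XA Xset A)
    (gstar : Profile N T) (hgstar : gstar ∈ Phi f xstar)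
    (hSVWE : ∀ x ∈ XA Xset A, 0 ≤ ⟪gstar, x - xstar⟫) :
    ‖xhat - xstar‖ ≤ (L₂ / α) * (1 / Real.sqrt N) := by
  have hNR : (0:ℝ) < (N:ℝ) := by exact_mod_cast hN
  have hεnn : (0:ℝ) ≤ L₂ / N := by positivity
  -- key identity : x̄₋ₙ + xₙ/N = x̄
  have keyavg : ∀ n, avgOther xhat n + (1 / (N : ℝ)) • xhat n = avg xhat := by
    intro n
    rw [avgOther, avg, ← smul_add, Finset.sum_erase_add _ _ (Finset.mem_univ n)]
  -- approximate subgradient property of ghat n w.r.t. h_n := f n · (avg xhat)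
  have Happrox : ∀ n, ∃ g, ‖g - ghat n‖ ≤ L₂ / N ∧
      g ∈ subdiff (fun y => f n y (avg xhat)) (xhat n) := by
    intro n
    apply approx_subgrad' _ ?_ _ _ _ hεnn
    · -- the approximate subgradient inequality
      intro y
      have h1 := hghat n y
      simp only [keyavg n] at h1
      have h2 : f n y (avgOther xhat n + (1 / (N : ℝ)) • y) ≤
          f n y (avg xhat) + L₂ / N * ‖y - xhat n‖ := by
        have h3 := hLip n y (avgOther xhat n + (1 / (N : ℝ)) • y) (avg xhat)
        have h4 : avgOther xhat n + (1 / (N : ℝ)) • y - avg xhat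
            = (1 / (N : ℝ)) • (y - xhat n) := by
          rw [← keyavg n]; module
        rw [h4, norm_smul, Real.norm_eq_abs, abs_of_nonneg (by positivity : (0:ℝ) ≤ 1/(N:ℝ))]
          at h3
        have h5 := (abs_le.1 h3).2
        have e : L₂ * (1 / (N:ℝ) * ‖y - xhat n‖) = L₂ / N * ‖y - xhat n‖ := by ring
        linarith [h5, e]
      linarith
    · -- convexity of h_n
      refine ⟨convex_univ, fun y _ z _ a b ha hb hab => ?_⟩
      have h1 := (hconv n).2 (Set.mem_univ (y, avg xhat)) (Set.mem_univ (z, avg xhat))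
        ha hb hab
      simp only [Prod.smul_mk, Prod.mk_add_mk, smul_eq_mul] at h1 ⊢
      have e : a • avg xhat + b • avg xhat = avg xhat := by
        rw [← add_smul, hab, one_smul]
      rw [e] at h1
      exact h1
  choose g hgnorm hgsub using Happrox
  set G : Profile N T := WithLp.toLp 2 g with hGdef
  have hGPhi : G ∈ Phi f xhat := fun n => hgsub n
  -- norm bound on G - ghat
  have hsN : 0 < Real.sqrt N := Real.sqrt_pos.2 hNR
  have hsq : Real.sqrt N * Real.sqrt N = (N:ℝ) := Real.mul_self_sqrt hNR.le
  have hGnorm : ‖G - ghat‖ ≤ L₂ / Real.sqrt N := by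
    have h1 : ‖G - ghat‖ ^ 2 ≤ (L₂ / Real.sqrt N) ^ 2 := by
      rw [PiLp.norm_sq_eq_of_L2]
      calc ∑ n, ‖(G - ghat) n‖ ^ 2 ≤ ∑ n : Fin N, (L₂ / N) ^ 2 := by
            refine Finset.sum_le_sum fun n _ => ?_
            have : (G - ghat) n = g n - ghat n := rfl
            rw [this]
            exact pow_le_pow_left₀ (norm_nonneg _) (hgnorm n) 2
        _ = (N:ℝ) * (L₂ / N) ^ 2 := by
            rw [Finset.sum_const, Finset.card_univ, Fintype.card_fin, nsmul_eq_mul]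
        _ = (L₂ / Real.sqrt N) ^ 2 := by
            field_simp
            nlinarith [hsq]
    have h2 := Real.sqrt_le_sqrt h1
    rwa [Real.sqrt_sq (norm_nonneg _), Real.sqrt_sq (by positivity)] at h2
  -- main chain
  have hmain := hmono xhat xstar hxhat.1 hxstar.1 G hGPhi gstar hgstar
  have hsplit : ⟪G - gstar, xhat - xstar⟫ ≤ ⟪G - ghat, xhat - xstar⟫ := by
    have e : (G - gstar : Profile N T) = (G - ghat) + (ghat - gstar) := by abel
    rw [e, inner_add_left, inner_sub_left, inner_sub_left]
    have h1 : ⟪ghat, xhat - xstar⟫ ≤ 0 := by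
      have := hVNE xstar hxstar
      rw [show xstar - xhat = -(xhat - xstar) by abel, inner_neg_right] at this
      linarith
    have h2 := hSVWE xhat hxhat
    linarith
  have hcs : ⟪G - ghat, xhat - xstar⟫ ≤ ‖G - ghat‖ * ‖xhat - xstar‖ :=
    real_inner_le_norm _ _
  have hfinal : α * ‖xhat - xstar‖ ^ 2 ≤ (L₂ / Real.sqrt N) * ‖xhat - xstar‖ := by
    have := mul_le_mul_of_nonneg_right hGnorm (norm_nonneg (xhat - xstar))
    linarith
  rcases (norm_nonneg (xhat - xstar)).eq_or_lt with h0 | hpos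
  · rw [← h0]; positivity
  · rw [div_mul_eq_mul_div, mul_one_div, div_div]
    rw [le_div_iff₀ (by positivity)]
    have hdiv : Real.sqrt N * (L₂ / Real.sqrt N) = L₂ := by field_simp
    have hfinal' : α * ‖xhat - xstar‖ ^ 2 * Real.sqrt N ≤ L₂ * ‖xhat - xstar‖ := by
      have := mul_le_mul_of_nonneg_left hfinal hsN.le
      nlinarith [this, hdiv]
    nlinarith [hfinal', hpos]
end
end

section
/- Assume each f_n is convex (jointly) on ℝ^T × ℝ^T, that f_n(u,·) is L₂-Lipschitz on ℝ^T for every n and u (L₂ > 0), and that Φ is α-strongly monotone on X with α > 0. Let x̂ ∈ X(A) be a VNE and x* ∈ X(A) an SVWE. Then (1/N)·∑_{n=1}^N ‖x̂_n − x*_n‖ ≤ L₂/(αN) and ‖x̄̂ − x̄*‖ ≤ L₂/(αN), where x̄̂ = (1/N)∑_n x̂_n and x̄* = (1/N)∑_n x*_n. -/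
open scoped RealInnerProductSpace

noncomputable section

section Subgrad

variable {E : Type*} [NormedAddCommGroup E] [InnerProductSpace ℝ E] [FiniteDimensional ℝ E]

/-- For a finite-valued convex function on a finite-dimensional inner product space,
there is a subgradient at `x` whose pairing with a given direction `d` dominates every
lower bound on the difference quotients in direction `d`. -/
lemma exists_subgrad_dir (F : E → ℝ) (hF : ConvexOn ℝ (Set.univ : Set E) F) (x d : E) :
    ∃ g : E, g ∈ subdiff F x ∧
      ∀ c : ℝ, (∀ t : ℝ, 0 < t → c * t ≤ F (x + t • d) - F x) → c ≤ ⟪g, d⟫ := by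
  classical
  set q : E → ℝ → ℝ := fun v t => (F (x + t • v) - F x) / t with hq
  -- monotonicity of difference quotients
  have hmono : ∀ v : E, ∀ s t : ℝ, 0 < s → s ≤ t → q v s ≤ q v t := by
    intro v s t hs hst
    have ht : 0 < t := lt_of_lt_of_le hs hst
    have h1 : (0:ℝ) ≤ 1 - s / t := by
      have : s / t ≤ 1 := (div_le_one ht).2 hst
      linarith
    have h2 : (0:ℝ) ≤ s / t := by positivity
    have hst' : s / t * t = s := div_mul_cancel₀ s ht.ne'
    have hcomb : (1 - s/t) • x + (s/t) • (x + t • v) = x + s • v := by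
      rw [smul_add, smul_smul, hst']
      module
    have key : F (x + s • v) ≤ (1 - s/t) * F x + (s/t) * F (x + t • v) := by
      calc F (x + s • v) = F ((1 - s/t) • x + (s/t) • (x + t • v)) := by rw [hcomb]
        _ ≤ (1 - s/t) * F x + (s/t) * F (x + t • v) :=
          hF.2 (Set.mem_univ _) (Set.mem_univ _) h1 h2 (by ring)
    have hkey := mul_le_mul_of_nonneg_left key ht.le
    have e1 : t * ((1 - s / t) * F x + s / t * F (x + t • v))
        = (t - s) * F x + s * F (x + t • v) := by field_simp; try ring
    simp only [hq]
    rw [div_le_div_iff₀ hs ht]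
    linarith [hkey, e1]
  set Q : E → Set ℝ := fun v => {r | ∃ t : ℝ, 0 < t ∧ r = q v t} with hQ
  have hQmem : ∀ v (t : ℝ), 0 < t → q v t ∈ Q v := fun v t ht => ⟨t, ht, rfl⟩
  have hQne : ∀ v, (Q v).Nonempty := fun v => ⟨q v 1, 1, one_pos, rfl⟩
  have hlb : ∀ v, ∀ r ∈ Q v, F x - F (x - v) ≤ r := by
    rintro v r ⟨t, ht, rfl⟩
    have h1 : (0:ℝ) ≤ t/(1+t) := by positivity
    have h2 : (0:ℝ) ≤ 1/(1+t) := by positivity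
    have hcomb : (t/(1+t)) • (x - v) + (1/(1+t)) • (x + t • v) = x := by
      have hne : (1+t : ℝ) ≠ 0 := by positivity
      have ht' : (0:ℝ) < 1 + t := by positivity
      match_scalars <;> (field_simp; try ring)
    have key : F x ≤ (t/(1+t)) * F (x - v) + (1/(1+t)) * F (x + t • v) := by
      calc F x = F ((t/(1+t)) • (x - v) + (1/(1+t)) • (x + t • v)) := by rw [hcomb]
        _ ≤ _ := hF.2 (Set.mem_univ _) (Set.mem_univ _) h1 h2
          (by field_simp; try ring)
    have hkey := mul_le_mul_of_nonneg_left key (by positivity : (0:ℝ) ≤ 1 + t)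
    have e1 : (1+t) * ((t/(1+t)) * F (x - v) + (1/(1+t)) * F (x + t • v))
        = t * F (x - v) + F (x + t • v) := by field_simp; try ring
    simp only [hq]
    rw [le_div_iff₀ ht]
    linarith [hkey, e1]
  have hbdd : ∀ v, BddBelow (Q v) := fun v => ⟨F x - F (x - v), fun r hr => hlb v r hr⟩
  set p : E → ℝ := fun v => sInf (Q v) with hp
  have hp_le : ∀ v (t : ℝ), 0 < t → p v ≤ q v t := fun v t ht => csInf_le (hbdd v) (hQmem v t ht)
  have hp_ge : ∀ v (c : ℝ), (∀ t : ℝ, 0 < t → c ≤ q v t) → c ≤ p v := by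
    intro v c hc
    exact le_csInf (hQne v) (by rintro r ⟨t, ht, rfl⟩; exact hc t ht)
  have hp_leF : ∀ v, p v ≤ F (x + v) - F x := by
    intro v
    have := hp_le v 1 one_pos
    simpa [hq] using this
  have hp_zero : p 0 = 0 := by
    apply le_antisymm
    · have := hp_leF 0
      simpa using this
    · apply hp_ge
      intro t ht
      simp [hq, ht.ne']
  -- subadditivity
  have hp_add : ∀ u v, p (u + v) ≤ p u + p v := by
    intro u v
    have key : ∀ t₁ t₂ : ℝ, 0 < t₁ → 0 < t₂ → p (u + v) ≤ q u t₁ + q v t₂ := by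
      intro t₁ t₂ ht₁ ht₂
      set t := min t₁ t₂ with hts
      have ht : 0 < t := lt_min ht₁ ht₂
      have hstep : q (u+v) (t/2) ≤ q u t + q v t := by
        have hcomb : (1/2 : ℝ) • (x + t • u) + (1/2 : ℝ) • (x + t • v) = x + (t/2) • (u+v) := by
          module
        have hc := hF.2 (Set.mem_univ (x + t • u)) (Set.mem_univ (x + t • v))
          (by norm_num : (0:ℝ) ≤ 1/2) (by norm_num : (0:ℝ) ≤ 1/2) (by norm_num)
        rw [hcomb] at hc
        simp only [smul_eq_mul] at hc
        simp only [hq]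
        rw [← add_div, div_le_div_iff₀ (by positivity) ht]
        nlinarith [mul_le_mul_of_nonneg_right hc ht.le]
      calc p (u+v) ≤ q (u+v) (t/2) := hp_le _ _ (by positivity)
        _ ≤ q u t + q v t := hstep
        _ ≤ q u t₁ + q v t₂ :=
          add_le_add (hmono u t t₁ ht (min_le_left _ _)) (hmono v t t₂ ht (min_le_right _ _))
    have h1 : ∀ t₁ : ℝ, 0 < t₁ → p (u + v) - q u t₁ ≤ p v := by
      intro t₁ ht₁
      apply hp_ge
      intro t₂ ht₂
      linarith [key t₁ t₂ ht₁ ht₂]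
    have h2 : p (u + v) - p v ≤ p u := by
      apply hp_ge
      intro t₁ ht₁
      linarith [h1 t₁ ht₁]
    linarith
  -- positive homogeneity
  have hp_smul_le : ∀ c : ℝ, 0 < c → ∀ v, p (c • v) ≤ c * p v := by
    intro c hc v
    have hq' : ∀ t : ℝ, 0 < t → p (c • v) ≤ c * q v t := by
      intro t ht
      have hs : 0 < t / c := by positivity
      have he : q (c • v) (t/c) = c * q v t := by
        simp only [hq]
        rw [smul_smul, div_mul_cancel₀ _ hc.ne']
        rw [div_div_eq_mul_div]
        ring
      calc p (c • v) ≤ q (c • v) (t/c) := hp_le _ _ hs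
        _ = c * q v t := he
    have h2 : p (c • v) / c ≤ p v := by
      apply hp_ge
      intro t ht
      rw [div_le_iff₀ hc]
      linarith [hq' t ht, mul_comm (q v t) c]
    calc p (c • v) = (p (c • v) / c) * c := by field_simp
      _ ≤ p v * c := mul_le_mul_of_nonneg_right h2 hc.le
      _ = c * p v := mul_comm _ _
  have hp_smul : ∀ c : ℝ, 0 < c → ∀ v, p (c • v) = c * p v := by
    intro c hc v
    refine le_antisymm (hp_smul_le c hc v) ?_
    have h := hp_smul_le c⁻¹ (by positivity) (c • v)
    rw [inv_smul_smul₀ hc.ne'] at h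
    have := mul_le_mul_of_nonneg_left h hc.le
    rw [← mul_assoc, mul_inv_cancel₀ hc.ne', one_mul] at this
    exact this
  -- a linear functional dominated by p, with prescribed behaviour on `d`
  have main : ∃ g : E →ₗ[ℝ] ℝ, (∀ v, g v ≤ p v) ∧ p d ≤ g d := by
    by_cases hd : d = 0
    · obtain ⟨g, hg1, hg2⟩ := exists_extension_of_le_sublinear
        ((0 : E →ₗ[ℝ] ℝ).toPMap ⊥) p (fun c hc v => hp_smul c hc v) hp_add
        (by
          rintro ⟨z, hz⟩
          change (0 : E →ₗ[ℝ] ℝ) z ≤ p z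
          simp only [LinearMap.zero_apply]
          rcases (Submodule.mem_bot ℝ).1 hz with rfl
          rw [hp_zero])
      refine ⟨g, hg2, ?_⟩
      subst hd
      rw [hp_zero, map_zero]
    · obtain ⟨g, hg1, hg2⟩ := exists_extension_of_le_sublinear
        (LinearPMap.mkSpanSingleton d (p d) hd) p (fun c hc v => hp_smul c hc v) hp_add
        (by
          rintro ⟨z, hz⟩
          rcases Submodule.mem_span_singleton.1 hz with ⟨a, rfl⟩
          rw [LinearPMap.mkSpanSingleton'_apply]
          rcases lt_trichotomy a 0 with ha | ha | ha
          · have h0 : p ((a • d) + ((-a) • d)) ≤ p (a • d) + p ((-a) • d) := hp_add _ _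
            rw [hp_smul (-a) (by linarith) d] at h0
            have : (a • d) + ((-a) • d) = 0 := by module
            rw [this, hp_zero] at h0
            simp only [smul_eq_mul, RingHom.id_apply]
            linarith
          · subst ha
            simp only [zero_smul, smul_eq_mul, zero_mul, RingHom.id_apply] at *
            rw [hp_zero]
          · rw [hp_smul a ha d]
            simp [smul_eq_mul])
      refine ⟨g, hg2, ?_⟩
      have := hg1 ⟨d, Submodule.mem_span_singleton_self d⟩
      rw [this, LinearPMap.mkSpanSingleton_apply]
  obtain ⟨g, hgle, hgd⟩ := main
  refine ⟨(InnerProductSpace.toDual ℝ E).symm (LinearMap.toContinuousLinearMap g), ?_, ?_⟩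
  · intro y
    have h1 : ⟪(InnerProductSpace.toDual ℝ E).symm (LinearMap.toContinuousLinearMap g), y - x⟫
        = g (y - x) := by
      rw [InnerProductSpace.toDual_symm_apply]
      simp
    rw [h1]
    have := (hgle (y - x)).trans (hp_leF (y - x))
    have h2 : x + (y - x) = y := by abel
    rw [h2] at this
    linarith
  · intro c hc
    have h1 : ⟪(InnerProductSpace.toDual ℝ E).symm (LinearMap.toContinuousLinearMap g), d⟫
        = g d := by
      rw [InnerProductSpace.toDual_symm_apply]
      simp
    rw [h1]
    refine le_trans ?_ hgd
    apply hp_ge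
    intro t ht
    simp only [hq]
    rw [le_div_iff₀ ht]
    exact hc t ht

end Subgrad

/-- averaged bounds between a VNE and an SVWE under strong monotonicity. -/
theorem vne_close_to_svwe_avg (N T : ℕ) (hN : 0 < N) (hT : 0 < T) (R : ℝ) (hR : 0 < R)
    (Xset : Fin N → Set (Vec T))
    (hXne : ∀ n, (Xset n).Nonempty) (hXconv : ∀ n, Convex ℝ (Xset n))
    (hXcomp : ∀ n, IsCompact (Xset n)) (hXbd : ∀ n, ∀ x ∈ Xset n, ‖x‖ ≤ R)
    (A : Set (Vec T)) (hAne : A.Nonempty) (hAcl : IsClosed A) (hAconv : Convex ℝ A)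
    (hXAne : (XA Xset A).Nonempty)
    (f : Fin N → Vec T → Vec T → ℝ)
    (hconv : ∀ n, ConvexOn ℝ Set.univ (fun p : Vec T × Vec T => f n p.1 p.2))
    (L₂ : ℝ) (hL₂ : 0 < L₂)
    (hLip : ∀ n u v w, |f n u v - f n u w| ≤ L₂ * ‖v - w‖)
    (α : ℝ) (hα : 0 < α)
    (hmono : ∀ x y : Profile N T, (∀ n, x n ∈ Xset n) → (∀ n, y n ∈ Xset n) →
      ∀ g ∈ Phi f x, ∀ h ∈ Phi f y, α * ‖x - y‖ ^ 2 ≤ ⟪g - h, x - y⟫)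
    (xhat : Profile N T) (hxhat : xhat ∈ XA Xset A)
    (ghat : Profile N T) (hghat : ghat ∈ PhiHat f xhat)
    (hVNE : ∀ x ∈ XA Xset A, 0 ≤ ⟪ghat, x - xhat⟫)
    (xstar : Profile N T) (hxstar : xstar ∈ XA Xset A)
    (gstar : Profile N T) (hgstar : gstar ∈ Phi f xstar)
    (hSVWE : ∀ x ∈ XA Xset A, 0 ≤ ⟪gstar, x - xstar⟫) :
    (1 / (N : ℝ)) * ∑ n, ‖xhat n - xstar n‖ ≤ L₂ / (α * N) ∧
      ‖avg xhat - avg xstar‖ ≤ L₂ / (α * N) := by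
  classical
  have hNR : (0:ℝ) < (N:ℝ) := Nat.cast_pos.2 hN
  set d : Fin N → Vec T := fun n => xstar n - xhat n with hd
  have havg : ∀ n : Fin N, avgOther xhat n + (1/(N:ℝ)) • xhat n = avg xhat := by
    intro n
    rw [avgOther, avg, ← smul_add, Finset.sum_erase_add _ _ (Finset.mem_univ n)]
  have hFconv : ∀ n : Fin N,
      ConvexOn ℝ (Set.univ : Set (Vec T)) (fun u => f n u (avg xhat)) := by
    intro n
    refine ⟨convex_univ, ?_⟩
    intro a _ b _ s t hs ht hst
    have h := (hconv n).2 (Set.mem_univ (a, avg xhat)) (Set.mem_univ (b, avg xhat)) hs ht hst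
    simpa [Prod.smul_mk, Prod.mk_add_mk, Convex.combo_self hst] using h
  have hgex : ∀ n : Fin N, ∃ g : Vec T,
      g ∈ subdiff (fun u => f n u (avg xhat)) (xhat n) ∧
      ∀ c : ℝ, (∀ t : ℝ, 0 < t →
        c * t ≤ f n (xhat n + t • d n) (avg xhat) - f n (xhat n) (avg xhat)) →
        c ≤ ⟪g, d n⟫ :=
    fun n => exists_subgrad_dir _ (hFconv n) (xhat n) (d n)
  choose g hg hgd using hgex
  set G : Profile N T := WithLp.toLp 2 g with hGdef
  have hG : G ∈ Phi f xhat := fun n => hg n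
  -- lower bound on the pairing of the chosen subgradients with the direction
  have hcn : ∀ n : Fin N, ⟪ghat n, d n⟫ - L₂/(N:ℝ) * ‖d n‖ ≤ ⟪g n, d n⟫ := by
    intro n
    apply hgd n
    intro t ht
    set y := xhat n + t • d n with hy
    have e0 : avgOther xhat n + (1/(N:ℝ)) • xhat n = avg xhat := havg n
    have e1 : y - xhat n = t • d n := by rw [hy]; abel
    have e2 : avgOther xhat n + (1/(N:ℝ)) • y = avg xhat + (t/(N:ℝ)) • d n := by
      rw [hy, smul_add, ← add_assoc, e0, smul_smul,
        show (1/(N:ℝ)) * t = t/(N:ℝ) by ring]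
    have hsub := hghat n y
    dsimp only at hsub
    rw [e0, e1, e2, real_inner_smul_right] at hsub
    have hlip := hLip n y (avg xhat + (t/(N:ℝ)) • d n) (avg xhat)
    rw [show (avg xhat + (t/(N:ℝ)) • d n) - avg xhat = (t/(N:ℝ)) • d n by abel] at hlip
    have h4 := (abs_le.1 hlip).2
    have e4 : ‖(t/(N:ℝ)) • d n‖ = t/(N:ℝ) * ‖d n‖ := by
      rw [norm_smul, Real.norm_eq_abs, abs_of_pos (by positivity)]
    rw [e4] at h4
    have hNne : (N:ℝ) ≠ 0 := hNR.ne'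
    have e5 : L₂ * (t/(N:ℝ) * ‖d n‖) = (L₂/(N:ℝ) * ‖d n‖) * t := by field_simp
    linarith [hsub, h4]
  -- strong monotonicity and the two variational inequalities
  have hm := hmono xhat xstar hxhat.1 hxstar.1 G hG gstar hgstar
  have hsv : 0 ≤ ⟪gstar, xhat - xstar⟫ := hSVWE xhat hxhat
  have hvn : 0 ≤ ⟪ghat, xstar - xhat⟫ := hVNE xstar hxstar
  set S : ℝ := ∑ n, ‖xhat n - xstar n‖ with hS
  have hdnorm : ∀ n : Fin N, ‖d n‖ = ‖xhat n - xstar n‖ := fun n => norm_sub_rev _ _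
  have hexpG : ⟪G - gstar, xhat - xstar⟫ = ⟪G, xhat - xstar⟫ - ⟪gstar, xhat - xstar⟫ :=
    inner_sub_left _ _ _
  have hexp1 : ⟪G, xhat - xstar⟫ = ∑ n, (- ⟪g n, d n⟫) := by
    rw [PiLp.inner_apply]
    refine Finset.sum_congr rfl fun n _ => ?_
    rw [PiLp.sub_apply]
    have : xhat n - xstar n = -(d n) := by rw [hd]; beta_reduce; abel
    rw [this, inner_neg_right]
  have hexp2 : ⟪ghat, xstar - xhat⟫ = ∑ n, ⟪ghat n, d n⟫ := by
    rw [PiLp.inner_apply]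
    exact Finset.sum_congr rfl fun n _ => by rw [PiLp.sub_apply]
  have hsum : ⟪G, xhat - xstar⟫ ≤ L₂/(N:ℝ) * S := by
    have h1 : ∑ n, (- ⟪g n, d n⟫) ≤ ∑ n, (- ⟪ghat n, d n⟫ + L₂/(N:ℝ) * ‖xhat n - xstar n‖) := by
      refine Finset.sum_le_sum fun n _ => ?_
      have := hcn n
      rw [hdnorm n] at this
      linarith
    rw [hexp1]
    have h2 : ∑ n, (- ⟪ghat n, d n⟫ + L₂/(N:ℝ) * ‖xhat n - xstar n‖)
        = - ⟪ghat, xstar - xhat⟫ + L₂/(N:ℝ) * S := by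
      rw [Finset.sum_add_distrib, Finset.sum_neg_distrib, ← hexp2, ← Finset.mul_sum, hS]
    rw [h2] at h1
    linarith
  have hD2 : ‖xhat - xstar‖ ^ 2 = ∑ n, ‖xhat n - xstar n‖ ^ 2 := by
    rw [PiLp.norm_sq_eq_of_L2]
    exact Finset.sum_congr rfl fun n _ => by rw [PiLp.sub_apply]
  have hCS : S ^ 2 ≤ (N:ℝ) * ∑ n, ‖xhat n - xstar n‖ ^ 2 := by
    have := sq_sum_le_card_mul_sum_sq (s := (Finset.univ : Finset (Fin N)))
      (f := fun n => ‖xhat n - xstar n‖)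
    simpa using this
  have hkey : α * ‖xhat - xstar‖ ^ 2 ≤ L₂/(N:ℝ) * S := by
    calc α * ‖xhat - xstar‖ ^ 2 ≤ ⟪G - gstar, xhat - xstar⟫ := hm
      _ = ⟪G, xhat - xstar⟫ - ⟪gstar, xhat - xstar⟫ := hexpG
      _ ≤ ⟪G, xhat - xstar⟫ := by linarith
      _ ≤ L₂/(N:ℝ) * S := hsum
  have hS0 : 0 ≤ S := Finset.sum_nonneg fun n _ => norm_nonneg _
  have hSsq : α * S ^ 2 ≤ L₂ * S := by
    have h1 : α * S ^ 2 ≤ α * ((N:ℝ) * ∑ n, ‖xhat n - xstar n‖ ^ 2) :=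
      mul_le_mul_of_nonneg_left hCS hα.le
    have h2 : α * ((N:ℝ) * ∑ n, ‖xhat n - xstar n‖ ^ 2)
        = (N:ℝ) * (α * ‖xhat - xstar‖ ^ 2) := by rw [hD2]; ring
    have h3 : (N:ℝ) * (α * ‖xhat - xstar‖ ^ 2) ≤ (N:ℝ) * (L₂/(N:ℝ) * S) :=
      mul_le_mul_of_nonneg_left hkey hNR.le
    have h4 : (N:ℝ) * (L₂/(N:ℝ) * S) = L₂ * S := by field_simp
    linarith
  have hSle : S ≤ L₂ / α := by
    rcases eq_or_lt_of_le hS0 with h | h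
    · rw [← h]; positivity
    · rw [le_div_iff₀ hα]
      have := (mul_le_mul_iff_of_pos_right h).1 (by nlinarith : α * S * S ≤ L₂ * S)
      linarith [this]
  have hgoal1 : (1 / (N : ℝ)) * S ≤ L₂ / (α * N) := by
    have : (1/(N:ℝ)) * S ≤ (1/(N:ℝ)) * (L₂/α) := by
      apply mul_le_mul_of_nonneg_left hSle (by positivity)
    calc (1/(N:ℝ)) * S ≤ (1/(N:ℝ)) * (L₂/α) := this
      _ = L₂ / (α * N) := by rw [one_div_mul_eq_div, div_div]
  refine ⟨hgoal1, ?_⟩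
  have havgeq : avg xhat - avg xstar = (1/(N:ℝ)) • ∑ n, (xhat n - xstar n) := by
    rw [avg, avg, ← smul_sub, Finset.sum_sub_distrib]
  have : ‖avg xhat - avg xstar‖ ≤ (1/(N:ℝ)) * S := by
    rw [havgeq, norm_smul, Real.norm_eq_abs, abs_of_pos (by positivity)]
    exact mul_le_mul_of_nonneg_left (norm_sum_le _ _) (by positivity)
  linarith
end
end

section
/- Assume each f_n is convex (jointly) on ℝ^T × ℝ^T, that f_n(u,·) is L₂-Lipschitz on ℝ^T for every n and u (L₂ > 0), and that Φ is β-aggregatively strongly monotone on X with β > 0. Let x̂ ∈ X(A) be a VNE and x* ∈ X(A) an SVWE, with averages x̄̂ = (1/N)∑_n x̂_n and x̄* = (1/N)∑_n x*_n. Then ‖x̄̂ − x̄*‖ ≤ √(2·R·L₂/(β·N)). -/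
open scoped RealInnerProductSpace

noncomputable section

lemma exists_mem_subdiff {E : Type*} [NormedAddCommGroup E] [InnerProductSpace ℝ E]
    [FiniteDimensional ℝ E] {φ : E → ℝ} (hφ : ConvexOn ℝ Set.univ φ) (x₀ : E) :
    ∃ g, g ∈ subdiff φ x₀ := by
  have hcont : Continuous φ := by
    rw [← continuousOn_univ]
    exact hφ.continuousOn isOpen_univ
  set S : Set (E × ℝ) := {p | φ p.1 < p.2} with hS
  have hSopen : IsOpen S := isOpen_lt (hcont.comp continuous_fst) continuous_snd
  have hSconv : Convex ℝ S := by
    rintro p hp q hq a b ha hb hab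
    simp only [hS, Set.mem_setOf_eq] at hp hq ⊢
    have h := hφ.2 (Set.mem_univ p.1) (Set.mem_univ q.1) ha hb hab
    simp only [smul_eq_mul] at h
    have h2 : a * φ p.1 + b * φ q.1 < a * p.2 + b * q.2 := by
      rcases eq_or_lt_of_le ha with rfl | ha'
      · have hb1 : b = 1 := by linarith
        subst hb1; simpa using hq
      · have h3 := mul_lt_mul_of_pos_left hp ha'
        have h4 := mul_le_mul_of_nonneg_left hq.le hb
        linarith
    have h5 : (a • p + b • q).1 = a • p.1 + b • q.1 := rfl
    have h6 : (a • p + b • q).2 = a * p.2 + b * q.2 := rfl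
    rw [h5, h6]
    exact lt_of_le_of_lt h h2
  have hx₀ : ((x₀, φ x₀) : E × ℝ) ∉ S := by simp [hS]
  obtain ⟨L, hL⟩ := geometric_hahn_banach_open_point hSconv hSopen hx₀
  have hsplit : ∀ (y : E) (t : ℝ), L (y, t) = L (y, 0) + t * L (0, 1) := by
    intro y t
    have h : ((y, t) : E × ℝ) = (y, 0) + t • ((0 : E), (1 : ℝ)) := by
      simp [Prod.ext_iff]
    rw [h, map_add, map_smul, smul_eq_mul]
  have hb : L ((0:E), (1:ℝ)) < 0 := by
    have h1 : ((x₀, φ x₀ + 1) : E × ℝ) ∈ S := by simp [hS]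
    have h2 := hL _ h1
    rw [hsplit x₀ (φ x₀ + 1), hsplit x₀ (φ x₀)] at h2
    nlinarith
  set b := L ((0:E), (1:ℝ)) with hbdef
  have key : ∀ y : E, L (y, 0) + φ y * b ≤ L (x₀, 0) + φ x₀ * b := by
    intro y
    have h2 : ∀ ε > (0:ℝ), L (y,0) + (φ y + ε) * b < L (x₀,0) + φ x₀ * b := by
      intro ε hε
      have hy : ((y, φ y + ε) : E × ℝ) ∈ S := by
        simp only [hS, Set.mem_setOf_eq]; linarith
      have h3 := hL _ hy
      rw [hsplit y (φ y + ε), hsplit x₀ (φ x₀)] at h3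
      linarith [h3]
    by_contra hcon
    push_neg at hcon
    set c₁ := L (y,0) + φ y * b
    set c₂ := L (x₀,0) + φ x₀ * b
    have hε : (0:ℝ) < (c₁ - c₂) / (-b) := by
      apply div_pos <;> linarith
    have h4 := h2 _ hε
    have h5 : ((c₁ - c₂) / (-b)) * b = c₂ - c₁ := by
      rw [div_mul_eq_mul_div, div_eq_iff (by linarith : -b ≠ (0:ℝ))]
      ring
    nlinarith [h4, h5]
  refine ⟨(InnerProductSpace.toDual ℝ E).symm
    ((-b)⁻¹ • (L.comp (ContinuousLinearMap.inl ℝ E ℝ))), fun y => ?_⟩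
  rw [InnerProductSpace.toDual_symm_apply]
  have happ : ((-b)⁻¹ • (L.comp (ContinuousLinearMap.inl ℝ E ℝ))) (y - x₀)
      = (-b)⁻¹ * (L (y, 0) - L (x₀, 0)) := by
    simp [ContinuousLinearMap.smul_apply, map_sub]
    ring
  rw [happ]
  have hB : (0:ℝ) < -b := by linarith
  have hk := key y
  have h6 : (-b)⁻¹ * (-b) = 1 := inv_mul_cancel₀ (ne_of_gt hB)
  have h7 : (-b)⁻¹ * ((φ y - φ x₀) * (-b)) = φ y - φ x₀ := by
    field_simp
    exact mul_div_cancel_left₀ _ (ne_of_lt hb)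
  have h8 : L (y,0) - L (x₀,0) ≤ (φ y - φ x₀) * (-b) := by nlinarith [hk]
  have h9 := mul_le_mul_of_nonneg_left h8 (inv_nonneg.mpr hB.le)
  rw [h7] at h9
  linarith

lemma subdiff_inner_le_of_quot {E : Type*} [NormedAddCommGroup E] [InnerProductSpace ℝ E]
    [FiniteDimensional ℝ E] {φ : E → ℝ} (hφ : ConvexOn ℝ Set.univ φ) (x d : E) (c : ℝ)
    (hc : ∀ s : ℝ, 0 < s → s ≤ 1 → φ x - φ (x - s • d) ≤ s * c) :
    ∃ g ∈ subdiff φ x, ⟪g, d⟫ ≤ c := by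
  have hcont : Continuous φ := by
    rw [← continuousOn_univ]
    exact hφ.continuousOn isOpen_univ
  set s : ℕ → ℝ := fun k => 1 / ((k : ℝ) + 1) with hsdef
  have hspos : ∀ k, 0 < s k := fun k => by positivity
  have hsle : ∀ k, s k ≤ 1 := fun k => by
    rw [hsdef]
    rw [div_le_one (by positivity)]
    simp
  set y : ℕ → E := fun k => x - s k • d with hydef
  have hytend : Filter.Tendsto y Filter.atTop (nhds x) := by
    have h0 : Filter.Tendsto s Filter.atTop (nhds 0) :=
      tendsto_one_div_add_atTop_nhds_zero_nat
    have := Filter.Tendsto.sub (tendsto_const_nhds (x := x)) (h0.smul_const d)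
    simpa using this
  choose g hg using fun k => exists_mem_subdiff hφ (y k)
  -- bound on φ on a compact ball
  obtain ⟨zM, hzM, hMax⟩ := (isCompact_closedBall x (‖d‖ + 1)).exists_isMaxOn
    ⟨x, by simp; positivity⟩ hcont.continuousOn
  obtain ⟨zm, hzm, hMin⟩ := (isCompact_closedBall x (‖d‖ + 1)).exists_isMinOn
    ⟨x, by simp; positivity⟩ hcont.continuousOn
  have hymem : ∀ k, y k ∈ Metric.closedBall x (‖d‖ + 1) := by
    intro k
    rw [Metric.mem_closedBall, dist_eq_norm]
    have : ‖y k - x‖ = s k * ‖d‖ := by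
      rw [hydef]
      simp [norm_smul, abs_of_pos (hspos k)]
    rw [this]
    nlinarith [hsle k, hspos k, norm_nonneg d]
  have hgb : ∀ k, ‖g k‖ ≤ φ zM - φ zm := by
    intro k
    rcases eq_or_ne (g k) 0 with h0 | h0
    · rw [h0, norm_zero]
      have : φ zm ≤ φ zM := hMin hzM
      linarith
    · have hz : y k + ‖g k‖⁻¹ • g k ∈ Metric.closedBall x (‖d‖ + 1) := by
        rw [Metric.mem_closedBall, dist_eq_norm]
        have h1 : ‖y k + ‖g k‖⁻¹ • g k - x‖ ≤ ‖y k - x‖ + ‖‖g k‖⁻¹ • g k‖ := by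
          have : y k + ‖g k‖⁻¹ • g k - x = (y k - x) + ‖g k‖⁻¹ • g k := by abel
          rw [this]; exact norm_add_le _ _
        have h2 : ‖‖g k‖⁻¹ • g k‖ = 1 := by
          rw [norm_smul, norm_inv, norm_norm]
          exact inv_mul_cancel₀ (norm_ne_zero_iff.mpr h0)
        have h3 : ‖y k - x‖ ≤ ‖d‖ := by
          have : ‖y k - x‖ = s k * ‖d‖ := by
            rw [hydef]; simp [norm_smul, abs_of_pos (hspos k)]
          rw [this]
          nlinarith [hsle k, hspos k, norm_nonneg d]
        linarith
      have h4 := hg k (y k + ‖g k‖⁻¹ • g k)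
      have h5 : ⟪g k, y k + ‖g k‖⁻¹ • g k - y k⟫ = ‖g k‖ := by
        have : y k + ‖g k‖⁻¹ • g k - y k = ‖g k‖⁻¹ • g k := by abel
        rw [this, real_inner_smul_right, real_inner_self_eq_norm_sq]
        rw [sq, inv_mul_cancel_left₀ (norm_ne_zero_iff.mpr h0)]
      rw [h5] at h4
      have h6 : φ (y k + ‖g k‖⁻¹ • g k) ≤ φ zM := hMax hz
      have h7 : φ zm ≤ φ (y k) := hMin (hymem k)
      linarith
  have hmem : ∀ k, g k ∈ Metric.closedBall (0 : E) (φ zM - φ zm) := by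
    intro k
    rw [Metric.mem_closedBall, dist_zero_right]
    exact hgb k
  obtain ⟨a, _, σ, hσ, hconv⟩ :=
    tendsto_subseq_of_bounded Metric.isBounded_closedBall hmem
  have hytend' : Filter.Tendsto (y ∘ σ) Filter.atTop (nhds x) :=
    hytend.comp hσ.tendsto_atTop
  refine ⟨a, fun z => ?_, ?_⟩
  · have hterm : ∀ k, φ (y (σ k)) + ⟪g (σ k), z - y (σ k)⟫ ≤ φ z := fun k => hg (σ k) z
    have htend : Filter.Tendsto (fun k => φ (y (σ k)) + ⟪g (σ k), z - y (σ k)⟫)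
        Filter.atTop (nhds (φ x + ⟪a, z - x⟫)) := by
      exact Filter.Tendsto.add ((hcont.tendsto x).comp hytend')
        (Filter.Tendsto.inner hconv (Filter.Tendsto.sub tendsto_const_nhds hytend'))
    exact le_of_tendsto htend (Filter.Eventually.of_forall hterm)
  · have hterm : ∀ k, ⟪g k, d⟫ ≤ c := by
      intro k
      have h4 := hg k x
      have h5 : ⟪g k, x - y k⟫ = s k * ⟪g k, d⟫ := by
        have : x - y k = s k • d := sub_sub_cancel x (s k • d)
        rw [this, real_inner_smul_right]
      rw [h5] at h4
      have h6 := hc (s k) (hspos k) (hsle k)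
      have h7 : s k * ⟪g k, d⟫ ≤ s k * c := by linarith
      exact le_of_mul_le_mul_left (by linarith) (hspos k)
    have htend : Filter.Tendsto (fun k => ⟪g (σ k), d⟫) Filter.atTop (nhds ⟪a, d⟫) :=
      Filter.Tendsto.inner hconv tendsto_const_nhds
    exact le_of_tendsto htend (Filter.Eventually.of_forall fun k => hterm (σ k))


lemma convexOn_fst_slice {E F : Type*} [NormedAddCommGroup E] [NormedSpace ℝ E]
    [NormedAddCommGroup F] [NormedSpace ℝ F]
    {f : E → F → ℝ} (hf : ConvexOn ℝ Set.univ (fun p : E × F => f p.1 p.2)) (v : F) :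
    ConvexOn ℝ Set.univ (fun u => f u v) := by
  refine ⟨convex_univ, fun u _ w _ a b ha hb hab => ?_⟩
  have h := hf.2 (Set.mem_univ (u, v)) (Set.mem_univ (w, v)) ha hb hab
  have hv : a • v + b • v = v := by rw [← add_smul, hab, one_smul]
  have h1 : a • ((u, v) : E × F) + b • (w, v) = (a • u + b • w, v) := by
    rw [Prod.smul_mk, Prod.smul_mk, Prod.mk_add_mk, hv]
  rw [h1] at h
  exact h

/-- aggregate bound between a VNE and an SVWE under aggregative strong
monotonicity. -/
theorem vne_close_to_svwe_aggregative (N T : ℕ) (hN : 0 < N) (hT : 0 < T) (R : ℝ) (hR : 0 < R)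
    (Xset : Fin N → Set (Vec T))
    (hXne : ∀ n, (Xset n).Nonempty) (hXconv : ∀ n, Convex ℝ (Xset n))
    (hXcomp : ∀ n, IsCompact (Xset n)) (hXbd : ∀ n, ∀ x ∈ Xset n, ‖x‖ ≤ R)
    (A : Set (Vec T)) (hAne : A.Nonempty) (hAcl : IsClosed A) (hAconv : Convex ℝ A)
    (hXAne : (XA Xset A).Nonempty)
    (f : Fin N → Vec T → Vec T → ℝ)
    (hconv : ∀ n, ConvexOn ℝ Set.univ (fun p : Vec T × Vec T => f n p.1 p.2))
    (L₂ : ℝ) (hL₂ : 0 < L₂)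
    (hLip : ∀ n u v w, |f n u v - f n u w| ≤ L₂ * ‖v - w‖)
    (β : ℝ) (hβ : 0 < β)
    (hmono : ∀ x y : Profile N T, (∀ n, x n ∈ Xset n) → (∀ n, y n ∈ Xset n) →
      ∀ g ∈ Phi f x, ∀ h ∈ Phi f y, (N : ℝ) * β * ‖avg x - avg y‖ ^ 2 ≤ ⟪g - h, x - y⟫)
    (xhat : Profile N T) (hxhat : xhat ∈ XA Xset A)
    (ghat : Profile N T) (hghat : ghat ∈ PhiHat f xhat)
    (hVNE : ∀ x ∈ XA Xset A, 0 ≤ ⟪ghat, x - xhat⟫)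
    (xstar : Profile N T) (hxstar : xstar ∈ XA Xset A)
    (gstar : Profile N T) (hgstar : gstar ∈ Phi f xstar)
    (hSVWE : ∀ x ∈ XA Xset A, 0 ≤ ⟪gstar, x - xstar⟫) :
    ‖avg xhat - avg xstar‖ ≤ Real.sqrt (2 * R * L₂ / (β * N)) := by
  obtain ⟨hxhatX, hxhatA⟩ := hxhat
  obtain ⟨hxstarX, hxstarA⟩ := hxstar
  have hNR : (0:ℝ) < N := Nat.cast_pos.mpr hN
  have havg : ∀ (x : Profile N T) (n : Fin N),
      avgOther x n + (1 / (N:ℝ)) • x n = avg x := by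
    intro x n
    rw [avgOther, avg, ← smul_add, Finset.sum_erase_add _ _ (Finset.mem_univ n)]
  have hkey : ∀ n : Fin N, ∃ gn ∈ subdiff (fun y => f n y (avg xhat)) (xhat n),
      ⟪gn, xhat n - xstar n⟫ ≤ ⟪ghat n, xhat n - xstar n⟫
        + L₂ * (1/(N:ℝ)) * ‖xhat n - xstar n‖ := by
    intro n
    apply subdiff_inner_le_of_quot (convexOn_fst_slice (hconv n) (avg xhat))
    intro s hs hs1
    set dn := xhat n - xstar n with hdn
    set yn := xhat n - s • dn with hyn
    show f n (xhat n) (avg xhat) - f n yn (avg xhat)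
      ≤ s * (⟪ghat n, dn⟫ + L₂ * (1/(N:ℝ)) * ‖dn‖)
    have h1 := hghat n yn
    simp only at h1
    have h2 : ⟪ghat n, yn - xhat n⟫ = -(s * ⟪ghat n, dn⟫) := by
      have he : yn - xhat n = -(s • dn) := by rw [hyn]; abel
      rw [he, inner_neg_right, real_inner_smul_right]
    rw [h2, havg xhat n] at h1
    have h3 : avgOther xhat n + (1/(N:ℝ)) • yn - avg xhat = -((s * (1/(N:ℝ))) • dn) := by
      rw [← havg xhat n, hyn]
      module
    have h4 := hLip n yn (avgOther xhat n + (1/(N:ℝ)) • yn) (avg xhat)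
    rw [h3, norm_neg, norm_smul, Real.norm_eq_abs,
      abs_of_pos (by positivity : (0:ℝ) < s * (1/(N:ℝ)))] at h4
    have habs := abs_le.mp h4
    have hub := habs.2
    linarith [h1, hub]
  choose g hg hgle using hkey
  set G : Profile N T := WithLp.toLp 2 g with hG
  have hGPhi : G ∈ Phi f xhat := fun n => hg n
  have hmono' := hmono xhat xstar hxhatX hxstarX G hGPhi gstar hgstar
  have hsvwe := hSVWE xhat ⟨hxhatX, hxhatA⟩
  have hvne := hVNE xstar ⟨hxstarX, hxstarA⟩
  have hvne' : ⟪ghat, xhat - xstar⟫ ≤ 0 := by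
    have he : xstar - xhat = -(xhat - xstar) := by abel
    rw [he, inner_neg_right] at hvne
    linarith
  have hGsum : ⟪G, xhat - xstar⟫ = ∑ n, ⟪g n, xhat n - xstar n⟫ := by
    rw [PiLp.inner_apply]
    rfl
  have hghatsum : ⟪ghat, xhat - xstar⟫ = ∑ n, ⟪ghat n, xhat n - xstar n⟫ := by
    rw [PiLp.inner_apply]
    rfl
  have hnormbd : ∀ n : Fin N, ‖xhat n - xstar n‖ ≤ 2 * R := by
    intro n
    have h1 := hXbd n _ (hxhatX n)
    have h2 := hXbd n _ (hxstarX n)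
    have := norm_sub_le (xhat n) (xstar n)
    linarith
  have hsum2 : ∑ n, (L₂ * (1/(N:ℝ)) * ‖xhat n - xstar n‖) ≤ 2 * R * L₂ := by
    have h1 : ∀ n ∈ Finset.univ, L₂ * (1/(N:ℝ)) * ‖xhat n - xstar n‖
        ≤ L₂ * (1/(N:ℝ)) * (2 * R) := fun n _ =>
      mul_le_mul_of_nonneg_left (hnormbd n) (by positivity)
    have h2 := Finset.sum_le_sum h1
    rw [Finset.sum_const, Finset.card_univ, Fintype.card_fin, nsmul_eq_mul] at h2
    have h3 : (N:ℝ) * (L₂ * (1/(N:ℝ)) * (2 * R)) = 2 * R * L₂ := by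
      field_simp
    linarith
  have hGle : ⟪G, xhat - xstar⟫ ≤ 2 * R * L₂ := by
    rw [hGsum]
    calc ∑ n, ⟪g n, xhat n - xstar n⟫
        ≤ ∑ n, (⟪ghat n, xhat n - xstar n⟫ + L₂ * (1/(N:ℝ)) * ‖xhat n - xstar n‖) :=
          Finset.sum_le_sum fun n _ => hgle n
      _ = ⟪ghat, xhat - xstar⟫ + ∑ n, (L₂ * (1/(N:ℝ)) * ‖xhat n - xstar n‖) := by
          rw [Finset.sum_add_distrib, hghatsum]
      _ ≤ 2 * R * L₂ := by linarith
  have hfin : (N:ℝ) * β * ‖avg xhat - avg xstar‖ ^ 2 ≤ 2 * R * L₂ := by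
    have hsp : ⟪G - gstar, xhat - xstar⟫ = ⟪G, xhat - xstar⟫ - ⟪gstar, xhat - xstar⟫ :=
      inner_sub_left _ _ _
    rw [hsp] at hmono'
    linarith
  have hsq : ‖avg xhat - avg xstar‖ ^ 2 ≤ 2 * R * L₂ / (β * N) := by
    rw [le_div_iff₀ (by positivity)]
    nlinarith [hfin]
  calc ‖avg xhat - avg xstar‖ = Real.sqrt (‖avg xhat - avg xstar‖ ^ 2) :=
        (Real.sqrt_sq (norm_nonneg _)).symm
    _ ≤ Real.sqrt (2 * R * L₂ / (β * N)) := Real.sqrt_le_sqrt hsq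
end
end

section
/- Let C and B be nonempty convex compact subsets of ℝ^T such that the affine span of B is contained in the affine span of C, and suppose d_H(C, B) ≤ D for some D ≥ 0, where d_H is the Hausdorff distance. Then every x ∈ C with d(x, relbd C) > D belongs to B (with the convention d(x, ∅) = +∞). -/
noncomputable section

/-- if `C`, `B` are nonempty convex compact subsets of `ℝ^T` with
`aff B ⊆ aff C` and `d_H(C,B) ≤ D`, then any point of `C` at distance `> D` from the
relative boundary of `C` lies in `B` (distance to an empty relative boundary is `+∞`,
encoded by universal quantification over its points). -/
theorem mem_of_far_from_relative_boundary (T : ℕ) (hT : 0 < T)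
    (C B : Set (EuclideanSpace ℝ (Fin T)))
    (hCne : C.Nonempty) (hBne : B.Nonempty)
    (hCconv : Convex ℝ C) (hBconv : Convex ℝ B)
    (hCcomp : IsCompact C) (hBcomp : IsCompact B)
    (hspan : affineSpan ℝ B ≤ affineSpan ℝ C)
    (D : ℝ) (hD : 0 ≤ D) (hH : Metric.hausdorffDist C B ≤ D)
    (x : EuclideanSpace ℝ (Fin T)) (hx : x ∈ C)
    (hfar : ∀ w ∈ intrinsicFrontier ℝ C, D < dist x w) :
    x ∈ B := by
  by_contra hxB
  -- nearest point of B to x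
  obtain ⟨p, hp, hmin⟩ := exists_norm_eq_iInf_of_complete_convex hBne hBcomp.isComplete hBconv x
  have hproj : ∀ w ∈ B, @inner ℝ _ _ (x - p) (w - p) ≤ 0 :=
    (norm_eq_iInf_iff_real_inner_le_zero hBconv hp).mp hmin
  set v : EuclideanSpace ℝ (Fin T) := x - p with hv
  have hvne : v ≠ 0 := by
    intro h
    apply hxB
    have hxp : x = p := by rwa [hv, sub_eq_zero] at h
    rwa [hxp]
  have hvpos : 0 < ‖v‖ := norm_pos_iff.mpr hvne
  -- the ray from x in direction v
  set S : Set ℝ := {t : ℝ | 0 ≤ t ∧ x + t • v ∈ C} with hS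
  have hS0 : (0:ℝ) ∈ S := by simp [hS, hx]
  have hSne : S.Nonempty := ⟨0, hS0⟩
  obtain ⟨R, hR⟩ := hCcomp.isBounded.subset_closedBall 0
  have hSbdd : BddAbove S := by
    refine ⟨(R + ‖x‖) / ‖v‖, fun t ht => ?_⟩
    obtain ⟨ht0, htC⟩ := ht
    have h1 : ‖x + t • v‖ ≤ R := by
      simpa [Metric.mem_closedBall, dist_zero_right] using hR htC
    have h2 : t * ‖v‖ ≤ R + ‖x‖ := by
      have he : ‖t • v‖ = ‖(x + t • v) - x‖ := by congr 1; abel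
      calc t * ‖v‖ = ‖t • v‖ := by rw [norm_smul, Real.norm_eq_abs, abs_of_nonneg ht0]
        _ = ‖(x + t • v) - x‖ := he
        _ ≤ ‖x + t • v‖ + ‖x‖ := norm_sub_le _ _
        _ ≤ R + ‖x‖ := by linarith
    rw [le_div_iff₀ hvpos]
    linarith
  have hSclosed : IsClosed S := by
    have he : S = Set.Ici (0:ℝ) ∩ (fun t : ℝ => x + t • v) ⁻¹' C := by
      ext t; simp [hS, Set.mem_Ici]
    rw [he]
    exact isClosed_Ici.inter (hCcomp.isClosed.preimage (by fun_prop))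
  set t₀ : ℝ := sSup S with ht₀def
  have ht₀S : t₀ ∈ S := hSclosed.csSup_mem hSne hSbdd
  obtain ⟨ht₀0, hzC⟩ := ht₀S
  set z : EuclideanSpace ℝ (Fin T) := x + t₀ • v with hz
  -- the whole line lies in the affine span of C
  have hxspan : x ∈ affineSpan ℝ C := subset_affineSpan ℝ C hx
  have hpspan : p ∈ affineSpan ℝ C := hspan (subset_affineSpan ℝ B hp)
  have hvdir : v ∈ (affineSpan ℝ C).direction := by
    rw [hv]; exact AffineSubspace.vsub_mem_direction hxspan hpspan
  have hline : ∀ t : ℝ, x + t • v ∈ affineSpan ℝ C := fun t => by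
    have h := AffineSubspace.vadd_mem_of_mem_direction
      (Submodule.smul_mem _ t hvdir) hxspan
    simpa [add_comm] using h
  set f : ℝ → affineSpan ℝ C := fun t => ⟨x + t • v, hline t⟩ with hf
  have hzspan : z ∈ affineSpan ℝ C := hline t₀
  -- z is on the intrinsic frontier
  have hzfr : z ∈ intrinsicFrontier ℝ C := by
    refine mem_intrinsicFrontier.mpr ⟨⟨z, hzspan⟩, ?_, rfl⟩
    rw [frontier_eq_closure_inter_closure]
    refine ⟨subset_closure (by simpa using hzC), ?_⟩
    rw [_root_.mem_closure_iff]
    intro U hU hzU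
    have hcont : Continuous f := by
      apply Continuous.subtype_mk; fun_prop
    have hopen : IsOpen (f ⁻¹' U) := hU.preimage hcont
    have ht₀mem : t₀ ∈ f ⁻¹' U := by
      have : f t₀ = ⟨z, hzspan⟩ := rfl
      simpa [this] using hzU
    obtain ⟨ε, hε, hball⟩ := Metric.isOpen_iff.mp hopen t₀ ht₀mem
    have htmem : t₀ + ε / 2 ∈ Metric.ball t₀ ε := by
      simp only [Metric.mem_ball, Real.dist_eq]
      rw [show t₀ + ε/2 - t₀ = ε/2 by ring, abs_of_nonneg (by linarith)]
      linarith
    refine ⟨f (t₀ + ε/2), hball htmem, ?_⟩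
    intro hmem
    have hSmem : t₀ + ε / 2 ∈ S := ⟨by linarith, by simpa [hf] using hmem⟩
    have := le_csSup hSbdd hSmem
    linarith
  -- distance from x to z exceeds D
  have hdist : dist x z = t₀ * ‖v‖ := by
    rw [dist_eq_norm]
    rw [show x - z = -(t₀ • v) by rw [hz]; abel, norm_neg, norm_smul, Real.norm_eq_abs,
      abs_of_nonneg ht₀0]
  have hDz : D < t₀ * ‖v‖ := by
    have h := hfar z hzfr; rwa [hdist] at h
  -- but z is within D of some point of B
  have hedist : EMetric.hausdorffEdist C B ≠ ⊤ :=
    Metric.hausdorffEdist_ne_top_of_nonempty_of_bounded hCne hBne hCcomp.isBounded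
      hBcomp.isBounded
  have hinf : Metric.infDist z B ≤ D :=
    le_trans (Metric.infDist_le_hausdorffDist_of_mem hzC hedist) hH
  obtain ⟨b, hb, hbd⟩ := hBcomp.exists_infDist_eq_dist hBne z
  have hbD : ‖z - b‖ ≤ D := by rw [← dist_eq_norm, ← hbd]; exact hinf
  -- inner product estimate
  have hsplit : z - b = v + (p - b) + t₀ • v := by rw [hz, hv]; abel
  have h2 : (0:ℝ) ≤ @inner ℝ _ _ (p - b) v := by
    have he : @inner ℝ _ _ (p - b) v = -(@inner ℝ _ _ v (b - p)) := by
      rw [real_inner_comm, show p - b = -(b - p) by abel, inner_neg_right]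
    rw [he]
    linarith [hproj b hb]
  have hinner : (1 + t₀) * ‖v‖ ^ 2 ≤ @inner ℝ _ _ (z - b) v := by
    rw [hsplit, inner_add_left, inner_add_left, real_inner_smul_left,
      real_inner_self_eq_norm_sq]
    nlinarith
  have hcs : @inner ℝ _ _ (z - b) v ≤ ‖z - b‖ * ‖v‖ := real_inner_le_norm _ _
  nlinarith [hvpos, hbD, hDz, hinner, hcs, ht₀0]
end
end

section
/- Assume the geometric clustering hypotheses: for every i ∈ I and n ∈ N_i, X_n and Y_i have the same affine span and d_H(X_n, Y_i) ≤ D; there exist ρ > 0 and z ∈ X(A) with d(z_n, relbd X_n) ≥ ρ for every n; and D < ρ/2. Then for every population profile x = (x_i)_{i∈I} ∈ X^I(A) there exists w ∈ X(A) such that ‖w_n − x_{i(n)}‖ ≤ 4·R·D/ρ for every n ∈ {1,…,N}. -/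
open scoped RealInnerProductSpace

noncomputable section

/-- Number of players in group `i`, i.e. `|N_i|` where `N_i = cl⁻¹(i)`. -/
def clCard {N : ℕ} {I : Type*} [Fintype I] [DecidableEq I] (cl : Fin N → I) (i : I) : ℕ :=
  (Finset.univ.filter fun n => cl n = i).card

/-- Average of a population profile: `x̄ = (1/N) ∑ᵢ |N_i| • xᵢ`. -/
def avgI {N T : ℕ} {I : Type*} [Fintype I] [DecidableEq I] (cl : Fin N → I)
    (x : I → Vec T) : Vec T :=
  (1 / (N : ℝ)) • ∑ i, (clCard cl i : ℝ) • x i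

/-- Feasible symmetric population profiles `X^I(A)`. -/
def XIA {N T : ℕ} {I : Type*} [Fintype I] [DecidableEq I] (cl : Fin N → I)
    (Yset : I → Set (Vec T)) (A : Set (Vec T)) : Set (I → Vec T) :=
  {x | (∀ i, x i ∈ Yset i) ∧ avgI cl x ∈ A}

/-- The player profile associated to a population profile: `ψ(x)ₙ = x_{i(n)}`. -/
def psiMap {N T : ℕ} {I : Type*} (cl : Fin N → I) (x : I → Vec T) : Profile N T :=
  WithLp.toLp 2 (fun n => x (cl n))

open Metric Set

lemma deep_mem {E : Type*} [NormedAddCommGroup E] [NormedSpace ℝ E]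
    {X : Set E} (hXcl : IsClosed X) {z v : E} (hz : z ∈ X)
    (hv : v ∈ affineSpan ℝ X) {ρ : ℝ}
    (hfar : ∀ w ∈ intrinsicFrontier ℝ X, ρ ≤ dist z w)
    (hlt : dist z v < ρ) : v ∈ X := by
  by_contra hvX
  have hzS : z ∈ affineSpan ℝ X := subset_affineSpan ℝ X hz
  set G : ℝ → E := fun t => z + t • (v - z) with hG
  have hGc : Continuous G := continuous_const.add (continuous_id.smul continuous_const)
  have hmem : ∀ t, G t ∈ affineSpan ℝ X := by
    intro t
    have hd : t • (v - z) ∈ (affineSpan ℝ X).direction :=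
      Submodule.smul_mem _ t (AffineSubspace.vsub_mem_direction hv hzS)
    have := AffineSubspace.vadd_mem_of_mem_direction hd hzS
    simpa [hG, vadd_eq_add, add_comm] using this
  set G' : ℝ → affineSpan ℝ X := fun t => ⟨G t, hmem t⟩ with hG'
  have hG'c : Continuous G' := hGc.subtype_mk hmem
  set T' : Set ℝ := Icc (0:ℝ) 1 ∩ G ⁻¹' X with hT'
  have hT'cl : IsClosed T' := isClosed_Icc.inter (hXcl.preimage hGc)
  have h0 : (0:ℝ) ∈ T' := ⟨⟨le_refl 0, zero_le_one⟩, by simp [hG, hz]⟩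
  have bdd : BddAbove T' := ⟨1, fun t ht => ht.1.2⟩
  set t₀ : ℝ := sSup T' with ht₀def
  have ht₀ : t₀ ∈ T' := hT'cl.csSup_mem ⟨0, h0⟩ bdd
  have ht₀1 : t₀ < 1 := by
    rcases lt_or_eq_of_le ht₀.1.2 with h | h
    · exact h
    · exfalso; apply hvX
      have := ht₀.2
      simp only [Set.mem_preimage, hG, h] at this
      simpa using this
  have hfr : G' t₀ ∈ frontier (((↑) : affineSpan ℝ X → E) ⁻¹' X) := by
    rw [frontier_eq_closure_inter_closure]
    constructor
    · exact subset_closure ht₀.2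
    · refine mem_closure_of_tendsto (b := nhdsWithin t₀ (Ioi t₀))
        ((hG'c.tendsto t₀).mono_left nhdsWithin_le_nhds) ?_
      filter_upwards [Ioo_mem_nhdsGT_of_mem ⟨le_refl t₀, ht₀1⟩] with t ht
      intro hmemX
      have htT : t ∈ T' := ⟨⟨le_trans ht₀.1.1 ht.1.le, ht.2.le⟩, hmemX⟩
      exact absurd (le_csSup bdd htT) (not_le_of_gt ht.1)
  have hwF : G t₀ ∈ intrinsicFrontier ℝ X := ⟨G' t₀, hfr, rfl⟩
  have hd1 : dist z (G t₀) = t₀ * ‖v - z‖ := by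
    rw [dist_eq_norm]
    simp [hG, norm_smul, abs_of_nonneg ht₀.1.1]
  have hd2 : dist z (G t₀) ≤ dist z v := by
    rw [hd1, dist_eq_norm, norm_sub_rev z v]
    calc t₀ * ‖v - z‖ ≤ 1 * ‖v - z‖ := by
          apply mul_le_mul_of_nonneg_right ht₀1.le (norm_nonneg _)
      _ = ‖v - z‖ := one_mul _
  linarith [hfar _ hwF]

lemma avg_psiMap {N T : ℕ} {I : Type*} [Fintype I] [DecidableEq I] (cl : Fin N → I)
    (x : I → Vec T) : avg (psiMap cl x) = avgI cl x := by
  unfold avg avgI psiMap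
  congr 1
  rw [← Finset.sum_fiberwise Finset.univ cl (fun n => x (cl n))]
  refine Finset.sum_congr rfl fun i _ => ?_
  have h : ∑ n ∈ Finset.univ.filter (fun n => cl n = i), x (cl n)
      = ∑ n ∈ Finset.univ.filter (fun n => cl n = i), x i :=
    Finset.sum_congr rfl fun n hn => by
      simp only [Finset.mem_filter] at hn; rw [hn.2]
  rw [h, Finset.sum_const, clCard, Nat.cast_smul_eq_nsmul]

lemma avg_combo {N T : ℕ} (a b : ℝ) (u v : Profile N T) :
    avg (WithLp.toLp 2 (fun n => a • u n + b • v n)) = a • avg u + b • avg v := by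
  unfold avg
  simp only [PiLp.toLp_apply]
  rw [Finset.sum_add_distrib, ← Finset.smul_sum, ← Finset.smul_sum, smul_add,
    smul_comm a, smul_comm b]

/-- any feasible population profile is close to a feasible player
profile. -/
theorem population_profile_close_to_feasible_profile (N T : ℕ) (hN : 0 < N) (hT : 0 < T)
    (R : ℝ) (hR : 0 < R)
    (Xset : Fin N → Set (Vec T))
    (hXne : ∀ n, (Xset n).Nonempty) (hXconv : ∀ n, Convex ℝ (Xset n))
    (hXcomp : ∀ n, IsCompact (Xset n)) (hXbd : ∀ n, ∀ x ∈ Xset n, ‖x‖ ≤ R)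
    (A : Set (Vec T)) (hAne : A.Nonempty) (hAcl : IsClosed A) (hAconv : Convex ℝ A)
    (I : Type) [Fintype I] [DecidableEq I] (cl : Fin N → I) (hcl : Function.Surjective cl)
    (Yset : I → Set (Vec T))
    (hYne : ∀ i, (Yset i).Nonempty) (hYconv : ∀ i, Convex ℝ (Yset i))
    (hYcomp : ∀ i, IsCompact (Yset i)) (hYbd : ∀ i, ∀ y ∈ Yset i, ‖y‖ ≤ R)
    (D : ℝ)
    (hspan : ∀ n, affineSpan ℝ (Xset n) = affineSpan ℝ (Yset (cl n)))
    (hhaus : ∀ n, Metric.hausdorffDist (Xset n) (Yset (cl n)) ≤ D)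
    (ρ : ℝ) (hρ : 0 < ρ) (z : Profile N T) (hz : z ∈ XA Xset A)
    (hzint : ∀ n, ∀ w ∈ intrinsicFrontier ℝ (Xset n), ρ ≤ dist (z n) w)
    (hDρ : D < ρ / 2)
    (x : I → Vec T) (hx : x ∈ XIA cl Yset A) :
    ∃ w ∈ XA Xset A, ∀ n, ‖w n - x (cl n)‖ ≤ 4 * R * D / ρ := by
  have hD0 : 0 ≤ D := le_trans Metric.hausdorffDist_nonneg (hhaus ⟨0, hN⟩)
  -- infDist of x (cl n) to Xset n is at most D
  have hinf : ∀ n : Fin N, Metric.infDist (x (cl n)) (Xset n) ≤ D := by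
    intro n
    have hne : EMetric.hausdorffEdist (Yset (cl n)) (Xset n) ≠ ⊤ :=
      Metric.hausdorffEdist_ne_top_of_nonempty_of_bounded (hYne _) (hXne n)
        (hYcomp _).isBounded (hXcomp n).isBounded
    calc Metric.infDist (x (cl n)) (Xset n)
        ≤ Metric.hausdorffDist (Yset (cl n)) (Xset n) :=
          Metric.infDist_le_hausdorffDist_of_mem (hx.1 (cl n)) hne
      _ = Metric.hausdorffDist (Xset n) (Yset (cl n)) := Metric.hausdorffDist_comm
      _ ≤ D := hhaus n
  rcases eq_or_lt_of_le hD0 with hD | hD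
  · -- D = 0 : x (cl n) ∈ Xset n already
    refine ⟨psiMap cl x, ⟨fun n => ?_, ?_⟩, fun n => ?_⟩
    · have : Metric.infDist (x (cl n)) (Xset n) = 0 :=
        le_antisymm (by rw [hD]; exact hinf n) Metric.infDist_nonneg
      exact ((hXcomp n).isClosed.mem_iff_infDist_zero (hXne n)).2 this
    · rw [avg_psiMap]; exact hx.2
    · simp [psiMap, ← hD]
  · -- D > 0
    set lam : ℝ := 2 * D / ρ with hlam
    have hlam0 : 0 < lam := by positivity
    have hlam1 : lam < 1 := by rw [hlam, div_lt_one hρ]; linarith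
    set w : Profile N T := WithLp.toLp 2 (fun n => (1 - lam) • psiMap cl x n + lam • z n) with hw
    have hmem : ∀ n, w n ∈ Xset n := by
      intro n
      set p := x (cl n) with hp
      obtain ⟨q, hq, hdq⟩ := (hXcomp n).exists_infDist_eq_dist (hXne n) p
      have hqD : dist p q ≤ D := by rw [← hdq]; exact hinf n
      -- the deep point c
      set c : Vec T := z n + ((1 - lam) / lam) • (p - q) with hc
      have hcdist : dist (z n) c < ρ := by
        rw [dist_eq_norm]
        have : z n - c = -(((1 - lam) / lam) • (p - q)) := by rw [hc]; abel
        rw [this, norm_neg, norm_smul, Real.norm_eq_abs,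
          abs_of_nonneg (div_nonneg (by linarith) hlam0.le)]
        have h1 : ‖p - q‖ ≤ D := by rw [← dist_eq_norm]; exact hqD
        have h2 : (1 - lam) / lam * ‖p - q‖ ≤ (1 - lam) / lam * D :=
          mul_le_mul_of_nonneg_left h1 (div_nonneg (by linarith) hlam0.le)
        have h3 : (1 - lam) / lam * D = ρ / 2 - D := by
          rw [hlam]; field_simp
        linarith
      have hpspan : p ∈ affineSpan ℝ (Xset n) := by
        rw [hspan n]; exact subset_affineSpan ℝ _ (hx.1 (cl n))
      have hcspan : c ∈ affineSpan ℝ (Xset n) := by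
        have hzS : z n ∈ affineSpan ℝ (Xset n) := subset_affineSpan ℝ _ (hz.1 n)
        have hqS : q ∈ affineSpan ℝ (Xset n) := subset_affineSpan ℝ _ hq
        have hd : ((1 - lam) / lam) • (p - q) ∈ (affineSpan ℝ (Xset n)).direction :=
          Submodule.smul_mem _ _ (AffineSubspace.vsub_mem_direction hpspan hqS)
        have := AffineSubspace.vadd_mem_of_mem_direction hd hzS
        simpa [hc, vadd_eq_add, add_comm] using this
      have hcX : c ∈ Xset n :=
        deep_mem (hXcomp n).isClosed (hz.1 n) hcspan (hzint n) hcdist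
      have hwe : w n = lam • c + (1 - lam) • q := by
        rw [hw, hc]
        simp only [psiMap, PiLp.toLp_apply, ← hp]
        rw [smul_add, smul_smul, mul_div_cancel₀ _ (ne_of_gt hlam0)]
        module
      rw [hwe]
      exact hXconv n hcX hq hlam0.le (by linarith) (by ring)
    refine ⟨w, ⟨hmem, ?_⟩, fun n => ?_⟩
    · have : avg w = (1 - lam) • avgI cl x + lam • avg z := by
        rw [hw, avg_combo (1 - lam) lam (psiMap cl x) z, avg_psiMap]
      rw [this]
      exact hAconv hx.2 hz.2 (by linarith) hlam0.le (by ring)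
    · have h1 : w n - x (cl n) = lam • (z n - x (cl n)) := by
        rw [hw]; simp only [psiMap, PiLp.toLp_apply]; module
      rw [h1, norm_smul, Real.norm_eq_abs, abs_of_pos hlam0]
      have h2 : ‖z n - x (cl n)‖ ≤ 2 * R :=
        le_trans (norm_sub_le _ _)
          (by linarith [hXbd n (z n) (hz.1 n), hYbd (cl n) (x (cl n)) (hx.1 (cl n))])
      calc lam * ‖z n - x (cl n)‖ ≤ lam * (2 * R) :=
            mul_le_mul_of_nonneg_left h2 hlam0.le
        _ = 4 * R * D / ρ := by rw [hlam]; ring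
end
end

section
/- Assume the geometric clustering hypotheses: for every i ∈ I and n ∈ N_i, X_n and Y_i have the same affine span and d_H(X_n, Y_i) ≤ D; there exist ρ > 0 and z ∈ X(A) with d(z_n, relbd X_n) ≥ ρ for every n; and D < ρ/2. Then for every x ∈ X(A) there exists w = (w_i)_{i∈I} ∈ X^I(A) such that ‖w_i − (1/|N_i|)∑_{n∈N_i} x_n‖ ≤ 2·R·|N_i|·D/ρ for every i ∈ I. -/
open scoped RealInnerProductSpace

noncomputable section

set_option maxHeartbeats 1000000

/-- If `z` is at distance `> ‖v‖` from the intrinsic frontier of a closed set `X ∋ z`,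
and `v` is in the direction of the affine span, then `z + v ∈ X`. -/
lemma deep_point_add_mem {T : ℕ} (X : Set (Vec T)) (hcl : IsClosed X)
    (z : Vec T) (hz : z ∈ X) (ρ : ℝ)
    (hzint : ∀ w ∈ intrinsicFrontier ℝ X, ρ ≤ dist z w)
    (v : Vec T) (hv : v ∈ (affineSpan ℝ X).direction) (hnv : ‖v‖ < ρ) :
    z + v ∈ X := by
  by_contra hw
  -- membership of the segment points in the affine span
  have hmem : ∀ t : ℝ, z + t • v ∈ affineSpan ℝ X := by
    intro t
    have : (t • v) +ᵥ z ∈ affineSpan ℝ X :=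
      AffineSubspace.vadd_mem_of_mem_direction (Submodule.smul_mem _ _ hv)
        (subset_affineSpan ℝ X hz)
    simpa [vadd_eq_add, add_comm] using this
  set S : Set ℝ := {t | t ∈ Set.Icc (0:ℝ) 1 ∧ z + t • v ∈ X} with hS
  have hS0 : (0:ℝ) ∈ S := by
    constructor
    · exact ⟨le_refl 0, zero_le_one⟩
    · simpa using hz
  have hSne : S.Nonempty := ⟨0, hS0⟩
  have hSbdd : BddAbove S := ⟨1, fun t ht => ht.1.2⟩
  have hScl : IsClosed S := by
    have h1 : IsClosed {t : ℝ | z + t • v ∈ X} :=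
      hcl.preimage (continuous_const.add (continuous_id.smul continuous_const))
    exact (isClosed_Icc.inter h1)
  set t₀ := sSup S with ht₀
  have ht₀S : t₀ ∈ S := hScl.csSup_mem hSne hSbdd
  have ht₀1 : t₀ < 1 := by
    rcases lt_or_eq_of_le ht₀S.1.2 with h | h
    · exact h
    · exfalso; apply hw; have := ht₀S.2; rw [h] at this; simpa using this
  have hafter : ∀ t : ℝ, t₀ < t → t ≤ 1 → z + t • v ∉ X := by
    intro t h1 h2 hmemX
    have : t ∈ S := ⟨⟨le_trans ht₀S.1.1 h1.le, h2⟩, hmemX⟩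
    exact absurd (le_csSup hSbdd this) (not_le.mpr h1)
  -- the point y is on the intrinsic frontier
  set y : Vec T := z + t₀ • v with hy
  have hyX : y ∈ X := ht₀S.2
  have hyspan : y ∈ affineSpan ℝ X := hmem t₀
  have hyfr : y ∈ intrinsicFrontier ℝ X := by
    refine ⟨⟨y, hyspan⟩, ?_, rfl⟩
    rw [frontier, Set.mem_diff]
    constructor
    · exact subset_closure (by simpa using hyX)
    · intro hint
      -- the path φ is continuous into the subtype
      have hφ : Continuous (fun t : ℝ => (⟨z + t • v, hmem t⟩ : affineSpan ℝ X)) :=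
        Continuous.subtype_mk (continuous_const.add (continuous_id.smul continuous_const)) _
      have hopen : IsOpen ((fun t : ℝ => (⟨z + t • v, hmem t⟩ : affineSpan ℝ X)) ⁻¹'
          (interior ((↑) ⁻¹' X))) := isOpen_interior.preimage hφ
      have ht₀mem : t₀ ∈ (fun t : ℝ => (⟨z + t • v, hmem t⟩ : affineSpan ℝ X)) ⁻¹'
          (interior ((↑) ⁻¹' X)) := hint
      rcases Metric.isOpen_iff.mp hopen t₀ ht₀mem with ⟨ε, hε, hball⟩
      set t₁ := min 1 (t₀ + ε / 2) with ht₁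
      have ht₁gt : t₀ < t₁ := lt_min ht₀1 (by linarith)
      have ht₁le : t₁ ≤ 1 := min_le_left _ _
      have ht₁ball : t₁ ∈ Metric.ball t₀ ε := by
        rw [Metric.mem_ball, Real.dist_eq, abs_lt]
        constructor
        · linarith
        · have : t₁ ≤ t₀ + ε / 2 := min_le_right _ _
          linarith
      have := hball ht₁ball
      have hm : z + t₁ • v ∈ X := by
        have h2 := interior_subset this
        simpa using h2
      exact hafter t₁ ht₁gt ht₁le hm
  have hdist : dist z y ≥ ρ := hzint y hyfr
  have : dist z y ≤ ‖v‖ := by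
    rw [hy, dist_eq_norm]
    have : z - (z + t₀ • v) = -(t₀ • v) := by abel
    rw [this, norm_neg, norm_smul, Real.norm_eq_abs, abs_of_nonneg ht₀S.1.1]
    calc t₀ * ‖v‖ ≤ 1 * ‖v‖ := by
          apply mul_le_mul_of_nonneg_right ht₀S.1.2 (norm_nonneg v)
      _ = ‖v‖ := one_mul _
  linarith


/-- A point of `X` that is `D`-deep (in the intrinsic sense) lies in any closed convex
set `Y` with the same affine span and Hausdorff distance at most `D` from `X`. -/
lemma deep_mem_of_hausdorff {T : ℕ} (X Y : Set (Vec T))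
    (hXne : X.Nonempty) (hYne : Y.Nonempty) (hYconv : Convex ℝ Y)
    (hXcomp : IsCompact X) (hYcomp : IsCompact Y)
    (hspan : affineSpan ℝ X = affineSpan ℝ Y)
    (D : ℝ) (hD : 0 ≤ D) (hhaus : Metric.hausdorffDist X Y ≤ D)
    (p : Vec T) (hp : p ∈ X)
    (hdeep : ∀ v ∈ (affineSpan ℝ X).direction, ‖v‖ < D → p + v ∈ X) :
    p ∈ Y := by
  by_contra hpY
  obtain ⟨f, u, hfY, hfp⟩ := geometric_hahn_banach_closed_point hYconv hYcomp.isClosed hpY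
  set a : Vec T := (InnerProductSpace.toDual ℝ (Vec T)).symm f with ha
  have hax : ∀ w : Vec T, ⟪a, w⟫ = f w := fun w => InnerProductSpace.toDual_symm_apply
  set V := (affineSpan ℝ X).direction with hV
  set b : Vec T := (Submodule.orthogonalProjection V a : Vec T) with hb
  have hbV : b ∈ V := (Submodule.orthogonalProjection V a).2
  have hab : ∀ w ∈ V, ⟪a, w⟫ = ⟪b, w⟫ := by
    intro w hw
    have horth : a - b ∈ Vᗮ := V.sub_starProjection_mem_orthogonal a
    have h := horth w hw
    rw [inner_sub_right] at h
    linarith [real_inner_comm a w, real_inner_comm b w, h]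
  have hinV : ∀ w₁ w₂ : Vec T, w₁ ∈ affineSpan ℝ X → w₂ ∈ affineSpan ℝ X →
      w₁ - w₂ ∈ V := by
    intro w₁ w₂ h1 h2
    simpa [vsub_eq_sub] using AffineSubspace.vsub_mem_direction h1 h2
  have hpspan : p ∈ affineSpan ℝ X := subset_affineSpan ℝ X hp
  have hYspan : ∀ y ∈ Y, y ∈ affineSpan ℝ X := by
    intro y hy; rw [hspan]; exact subset_affineSpan ℝ Y hy
  have hYne2 := hYne
  obtain ⟨y₁, hy₁⟩ := hYne2
  -- b ≠ 0
  have hbne : b ≠ 0 := by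
    intro h0
    have h1 : ⟪a, p - y₁⟫ = 0 := by rw [hab _ (hinV p y₁ hpspan (hYspan y₁ hy₁)), h0]; simp
    have h2 : f p - f y₁ = 0 := by
      have h3 := hax (p - y₁)
      rw [map_sub] at h3
      linarith [h3 ▸ h1]
    have := hfY y₁ hy₁
    linarith
  have hbpos : 0 < ‖b‖ := norm_pos_iff.mpr hbne
  -- maximum of f on Y
  obtain ⟨y₂, hy₂Y, hy₂max'⟩ := hYcomp.exists_isMaxOn hYne f.continuous.continuousOn
  have hy₂max : ∀ y ∈ Y, f y ≤ f y₂ := fun y hy => hy₂max' hy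
  set δ := u - f y₂ with hδ
  have hδpos : 0 < δ := by have := hfY y₂ hy₂Y; simp [hδ]; linarith
  set ε := min 1 (δ / (D * ‖b‖ + 1)) with hε
  have hεpos : 0 < ε := lt_min one_pos (div_pos hδpos (by positivity))
  have hεsmall : ε * (D * ‖b‖) < δ := by
    have h1 : ε ≤ δ / (D * ‖b‖ + 1) := min_le_right _ _
    have h2 : 0 ≤ D * ‖b‖ := by positivity
    have h3 : ε * (D * ‖b‖) ≤ (δ / (D * ‖b‖ + 1)) * (D * ‖b‖) :=
      mul_le_mul_of_nonneg_right h1 h2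
    have h4 : (δ / (D * ‖b‖ + 1)) * (D * ‖b‖) < δ := by
      rw [div_mul_eq_mul_div, div_lt_iff₀ (by positivity)]
      nlinarith
    linarith
  set c := (1 - ε) * D with hc
  have hc0 : 0 ≤ c := by
    have : ε ≤ 1 := min_le_left _ _
    have h2 : 0 ≤ 1 - ε := by linarith
    positivity
  have hcD : c ≤ D := by nlinarith [hεpos]
  set v := (c / ‖b‖) • b with hv
  have hvV : v ∈ V := Submodule.smul_mem _ _ hbV
  have hnv : ‖v‖ = c := by
    rw [hv, norm_smul, Real.norm_eq_abs, abs_of_nonneg (by positivity)]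
    field_simp
  set q := p + v with hq
  have hqX : q ∈ X := by
    rcases eq_or_lt_of_le hD with hD0 | hDpos
    · have hc00 : c = 0 := le_antisymm (by rw [← hD0] at hcD; exact hcD) hc0
      have : v = 0 := by rw [hv, hc00]; simp
      rw [hq, this, add_zero]; exact hp
    · have hcD' : c < D := by nlinarith [hεpos]
      exact hdeep v hvV (by rw [hnv]; exact hcD')
  -- infDist q Y ≤ D and attained
  have hedist : EMetric.hausdorffEdist X Y ≠ ⊤ :=
    Metric.hausdorffEdist_ne_top_of_nonempty_of_bounded hXne hYne
      hXcomp.isBounded hYcomp.isBounded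
  have hinf : Metric.infDist q Y ≤ D :=
    le_trans (Metric.infDist_le_hausdorffDist_of_mem hqX hedist) hhaus
  obtain ⟨y₀, hy₀Y, hy₀d⟩ := hYcomp.exists_infDist_eq_dist hYne q
  have hdqy : dist q y₀ ≤ D := by rw [← hy₀d]; exact hinf
  -- inner product computations
  have hfq : f q = f p + c * ‖b‖ := by
    have h1 : ⟪a, v⟫ = c * ‖b‖ := by
      rw [hab v hvV, hv, real_inner_smul_right, real_inner_self_eq_norm_sq]
      field_simp
    have h2 : f q = f p + f v := by rw [hq]; exact map_add f p v
    rw [h2, ← hax v, h1]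
  have hkey : ⟪a, q - y₀⟫ ≤ ‖b‖ * D := by
    rw [hab _ (hinV q y₀ (by
      have : q ∈ affineSpan ℝ X := subset_affineSpan ℝ X hqX
      exact this) (hYspan y₀ hy₀Y))]
    calc ⟪b, q - y₀⟫ ≤ ‖b‖ * ‖q - y₀‖ := real_inner_le_norm b _
      _ ≤ ‖b‖ * D := by
          apply mul_le_mul_of_nonneg_left _ (norm_nonneg b)
          rw [← dist_eq_norm]; exact hdqy
  have hkey2 : ⟪a, q - y₀⟫ = f q - f y₀ := by
    rw [inner_sub_right, hax, hax]
  have hfy₀ : f y₀ ≤ u - δ := by have := hy₂max y₀ hy₀Y; simp [hδ]; linarith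
  -- contradiction
  have : ‖b‖ * D ≥ f p + c * ‖b‖ - f y₀ := by rw [← hfq]; linarith [hkey, hkey2.symm.le]
  nlinarith [hfp, hfy₀, hεsmall, hbpos]


/-- any feasible player profile is close to a feasible population
profile. -/
theorem feasible_profile_close_to_population_profile (N T : ℕ) (hN : 0 < N) (hT : 0 < T)
    (R : ℝ) (hR : 0 < R)
    (Xset : Fin N → Set (Vec T))
    (hXne : ∀ n, (Xset n).Nonempty) (hXconv : ∀ n, Convex ℝ (Xset n))
    (hXcomp : ∀ n, IsCompact (Xset n)) (hXbd : ∀ n, ∀ x ∈ Xset n, ‖x‖ ≤ R)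
    (A : Set (Vec T)) (hAne : A.Nonempty) (hAcl : IsClosed A) (hAconv : Convex ℝ A)
    (I : Type) [Fintype I] [DecidableEq I] (cl : Fin N → I) (hcl : Function.Surjective cl)
    (Yset : I → Set (Vec T))
    (hYne : ∀ i, (Yset i).Nonempty) (hYconv : ∀ i, Convex ℝ (Yset i))
    (hYcomp : ∀ i, IsCompact (Yset i)) (hYbd : ∀ i, ∀ y ∈ Yset i, ‖y‖ ≤ R)
    (D : ℝ)
    (hspan : ∀ n, affineSpan ℝ (Xset n) = affineSpan ℝ (Yset (cl n)))
    (hhaus : ∀ n, Metric.hausdorffDist (Xset n) (Yset (cl n)) ≤ D)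
    (ρ : ℝ) (hρ : 0 < ρ) (z : Profile N T) (hz : z ∈ XA Xset A)
    (hzint : ∀ n, ∀ w ∈ intrinsicFrontier ℝ (Xset n), ρ ≤ dist (z n) w)
    (hDρ : D < ρ / 2)
    (x : Profile N T) (hx : x ∈ XA Xset A) :
    ∃ w ∈ XIA cl Yset A, ∀ i,
      ‖w i - (1 / (clCard cl i : ℝ)) • ∑ n ∈ Finset.univ.filter (fun n => cl n = i), x n‖
        ≤ 2 * R * (clCard cl i : ℝ) * D / ρ := by
  obtain ⟨hxX, hxA⟩ := hx
  obtain ⟨hzX, hzA⟩ := hz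
  classical
  have hD0 : 0 ≤ D := le_trans Metric.hausdorffDist_nonneg (hhaus ⟨0, hN⟩)
  set lam := D / ρ with hlam
  have hlam0 : 0 ≤ lam := div_nonneg hD0 hρ.le
  have hlam1 : lam ≤ 1 := by rw [hlam, div_le_one hρ]; linarith
  have hlamρ : lam * ρ = D := div_mul_cancel₀ D hρ.ne'
  set x' : Fin N → Vec T := fun n => x n + lam • (z n - x n) with hx'
  have hx'X : ∀ n, x' n ∈ Xset n := fun n =>
    (hXconv n).add_smul_sub_mem (hxX n) (hzX n) ⟨hlam0, hlam1⟩
  have hx'Y : ∀ n, x' n ∈ Yset (cl n) := by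
    intro n
    apply deep_mem_of_hausdorff (Xset n) (Yset (cl n)) (hXne n) (hYne (cl n))
      (hYconv (cl n)) (hXcomp n) (hYcomp (cl n)) (hspan n) D hD0 (hhaus n)
      (x' n) (hx'X n)
    intro v hv hnv
    have hDpos : 0 < D := lt_of_le_of_lt (norm_nonneg v) hnv
    have hlampos : 0 < lam := div_pos hDpos hρ
    have hmem : z n + lam⁻¹ • v ∈ Xset n := by
      apply deep_point_add_mem (Xset n) (hXcomp n).isClosed (z n) (hzX n) ρ (hzint n)
        _ (Submodule.smul_mem _ _ hv)
      rw [norm_smul, Real.norm_eq_abs, abs_of_nonneg (by positivity)]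
      rw [inv_mul_lt_iff₀ hlampos]
      rw [hlamρ]; exact hnv
    have heq : x' n + v = x n + lam • ((z n + lam⁻¹ • v) - x n) := by
      rw [show (z n + lam⁻¹ • v) - x n = (z n - x n) + lam⁻¹ • v by abel,
        smul_add, smul_smul, mul_inv_cancel₀ hlampos.ne', one_smul, hx']
      beta_reduce
      abel
    rw [heq]
    exact (hXconv n).add_smul_sub_mem (hxX n) hmem ⟨hlam0, hlam1⟩
  have hcard : ∀ i, 0 < clCard cl i := by
    intro i; obtain ⟨n, hn⟩ := hcl i
    rw [clCard, Finset.card_pos]; exact ⟨n, by simp [hn]⟩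
  have hcardR : ∀ i, (0:ℝ) < (clCard cl i : ℝ) := fun i => Nat.cast_pos.mpr (hcard i)
  set w : I → Vec T :=
    fun i => (1 / (clCard cl i : ℝ)) • ∑ n ∈ Finset.univ.filter (fun n => cl n = i), x' n
    with hwdef
  have hwY : ∀ i, w i ∈ Yset i := by
    intro i
    show (1 / (clCard cl i : ℝ)) • ∑ n ∈ Finset.univ.filter (fun n => cl n = i), x' n ∈ Yset i
    rw [Finset.smul_sum]
    apply (hYconv i).sum_mem
    · intro n _; positivity
    · rw [Finset.sum_const, nsmul_eq_mul]
      have : ((Finset.univ.filter (fun n => cl n = i)).card : ℝ) = (clCard cl i : ℝ) := rfl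
      rw [this, mul_one_div, div_self (hcardR i).ne']
    · intro n hn
      have h2 : cl n = i := (Finset.mem_filter.mp hn).2
      rw [← h2]; exact hx'Y n
  have hsum : ∀ i, (clCard cl i : ℝ) • w i
      = ∑ n ∈ Finset.univ.filter (fun n => cl n = i), x' n := by
    intro i
    show (clCard cl i : ℝ) • ((1 / (clCard cl i : ℝ)) • _) = _
    rw [smul_smul, mul_one_div, div_self (hcardR i).ne', one_smul]
  have havg : avgI cl w = (1 / (N:ℝ)) • ∑ n, x' n := by
    rw [avgI]
    congr 1
    rw [← Finset.sum_fiberwise Finset.univ cl x']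
    exact Finset.sum_congr rfl fun i _ => hsum i
  have hsx : ∑ n, x' n = ∑ n, x n + lam • (∑ n, z n - ∑ n, x n) := by
    rw [hx', Finset.sum_add_distrib]
    congr 1
    rw [← Finset.smul_sum, Finset.sum_sub_distrib]
  have havgA : avgI cl w ∈ A := by
    have heq2 : avgI cl w = avg x + lam • (avg z - avg x) := by
      rw [havg, hsx, avg, avg]
      module
    rw [heq2]
    exact hAconv.add_smul_sub_mem hxA hzA ⟨hlam0, hlam1⟩
  refine ⟨w, ⟨hwY, havgA⟩, ?_⟩
  intro i
  set t := Finset.univ.filter (fun n : Fin N => cl n = i) with ht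
  have hdiff : w i - (1/(clCard cl i : ℝ)) • ∑ n ∈ t, x n
      = (1/(clCard cl i:ℝ)) • ∑ n ∈ t, lam • (z n - x n) := by
    show (1 / (clCard cl i : ℝ)) • ∑ n ∈ t, x' n - _ = _
    rw [← smul_sub, ← Finset.sum_sub_distrib]
    congr 1
    refine Finset.sum_congr rfl fun n _ => ?_
    show x' n - x n = lam • (z n - x n)
    rw [hx']
    module
  rw [hdiff]
  have hsum_le : ‖∑ n ∈ t, lam • (z n - x n)‖ ≤ (t.card : ℝ) * (lam * (2*R)) := by
    refine le_trans (norm_sum_le _ _) ?_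
    have h2 : ∀ n ∈ t, ‖lam • (z n - x n)‖ ≤ lam * (2*R) := by
      intro n _
      rw [norm_smul, Real.norm_eq_abs, abs_of_nonneg hlam0]
      apply mul_le_mul_of_nonneg_left _ hlam0
      calc ‖z n - x n‖ ≤ ‖z n‖ + ‖x n‖ := norm_sub_le _ _
        _ ≤ 2*R := by linarith [hXbd n _ (hzX n), hXbd n _ (hxX n)]
    calc ∑ n ∈ t, ‖lam • (z n - x n)‖ ≤ ∑ _n ∈ t, lam * (2*R) := Finset.sum_le_sum h2
      _ = (t.card : ℝ) * (lam * (2*R)) := by rw [Finset.sum_const, nsmul_eq_mul]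
  have hcardt : (t.card : ℝ) = (clCard cl i : ℝ) := rfl
  rw [norm_smul, Real.norm_eq_abs, abs_of_pos (one_div_pos.mpr (hcardR i))]
  set c : ℝ := (clCard cl i : ℝ) with hcdef
  have hc1 : (1:ℝ) ≤ c := by
    rw [hcdef]; exact_mod_cast hcard i
  have hstep : (1/c) * ‖∑ n ∈ t, lam • (z n - x n)‖ ≤ lam * (2*R) := by
    have := hsum_le
    rw [hcardt] at this
    calc (1/c) * ‖∑ n ∈ t, lam • (z n - x n)‖ ≤ (1/c) * (c * (lam * (2*R))) := by
          apply mul_le_mul_of_nonneg_left this (by positivity)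
      _ = lam * (2*R) := by field_simp
  refine le_trans hstep ?_
  rw [hlam, div_mul_eq_mul_div, div_le_div_iff₀ hρ hρ]
  nlinarith [mul_nonneg (mul_nonneg (mul_nonneg (by linarith : (0:ℝ) ≤ c - 1) (by linarith : (0:ℝ) ≤ 2*R)) hD0) hρ.le]
end
end

section
/- Assume the clustering hypotheses (a)–(d) and that Φ is α-strongly monotone on B_R = {x ∈ (ℝ^T)^N : ‖x_n‖ ≤ R for all n} with α > 0. Let x = (x_i)_{i∈I} be an SVWE of the auxiliary population game with average x̄ = (1/N)∑_i |N_i|·x_i, and x* ∈ X(A) an SVWE of the original population game with average x̄* = (1/N)∑_n x*_n. Then (1/N)·∑_{n=1}^N ‖ψ(x)_n − x*_n‖ ≤ √(K/α) and ‖x̄ − x̄*‖ ≤ √(K/α), where K = 2R·(3·L₁·D/ρ + D_f). -/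
open scoped RealInnerProductSpace

noncomputable section

/-! ### Auxiliary lemmas -/

open Filter Topology in
lemma svwe_ball_subset_of_intrinsicFrontier {E : Type*} [NormedAddCommGroup E]
    [InnerProductSpace ℝ E] {X : Set E} (hXcl : IsClosed X) {z : E} (hzX : z ∈ X) {ρ : ℝ}
    (hfar : ∀ w ∈ intrinsicFrontier ℝ X, ρ ≤ dist z w)
    {w : E} (hw : w ∈ affineSpan ℝ X) (hdist : dist z w < ρ) : w ∈ X := by
  by_contra hwX
  set q : ℝ → E := fun t => t • (w - z) + z with hq
  have hqmem : ∀ t : ℝ, q t ∈ affineSpan ℝ X := fun t =>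
    AffineSubspace.smul_vsub_vadd_mem _ t hw (mem_affineSpan ℝ hzX) (mem_affineSpan ℝ hzX)
  have hqcont : Continuous q := by
    simp only [hq]
    continuity
  set S : Set ℝ := Set.Icc (0:ℝ) 1 ∩ q ⁻¹' X with hSdef
  have hq0 : q 0 = z := by simp [hq]
  have hq1 : q 1 = w := by simp [hq]
  have hS0 : (0:ℝ) ∈ S := ⟨⟨le_refl 0, zero_le_one⟩, by simp [hq0, hzX]⟩
  have hScl : IsClosed S := isClosed_Icc.inter (hXcl.preimage hqcont)
  have hSbdd : BddAbove S := ⟨1, fun t ht => ht.1.2⟩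
  set t0 := sSup S with ht0def
  have ht0S : t0 ∈ S := hScl.csSup_mem ⟨0, hS0⟩ hSbdd
  have ht01 : t0 ≤ 1 := ht0S.1.2
  have hqt0 : q t0 ∈ X := ht0S.2
  have ht0lt : t0 < 1 := by
    rcases lt_or_eq_of_le ht01 with h | h
    · exact h
    · exfalso
      apply hwX
      rw [← hq1, ← h]
      exact hqt0
  have hnot : ∀ t, t0 < t → t ≤ 1 → q t ∉ X := fun t h1 h2 hmem =>
    absurd (le_csSup hSbdd ⟨⟨by linarith [ht0S.1.1], h2⟩, hmem⟩) (not_le.mpr h1)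
  set p' : affineSpan ℝ X := ⟨q t0, hqmem t0⟩ with hp'
  have hfront : p' ∈ frontier ((↑) ⁻¹' X : Set (affineSpan ℝ X)) := by
    rw [frontier_eq_closure_inter_closure]
    constructor
    · exact subset_closure (by simpa [hp'] using hqt0)
    · set u : ℕ → ℝ := fun k => t0 + (1 - t0) * (1 / (k + 1 : ℝ)) with hu
      have hupos : ∀ k, t0 < u k := by
        intro k
        have h1 : (0:ℝ) < 1 / (k + 1 : ℝ) := by positivity
        have h2 : (0:ℝ) < 1 - t0 := by linarith
        simp only [hu]
        nlinarith
      have hule : ∀ k, u k ≤ 1 := by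
        intro k
        have h1 : (1:ℝ) / (k + 1 : ℝ) ≤ 1 := by
          rw [div_le_one (by positivity)]
          linarith [Nat.cast_nonneg (α := ℝ) k]
        have h2 : (0:ℝ) ≤ 1 - t0 := by linarith
        simp only [hu]
        nlinarith
      have hutend : Filter.Tendsto u Filter.atTop (𝓝 t0) := by
        have h1 := tendsto_one_div_add_atTop_nhds_zero_nat.const_mul (1 - t0)
        have h2 := h1.const_add t0
        simpa [hu] using h2
      have htend : Filter.Tendsto (fun k : ℕ => (⟨q (u k), hqmem _⟩ : affineSpan ℝ X))
          Filter.atTop (𝓝 p') := by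
        rw [tendsto_subtype_rng]
        exact (hqcont.tendsto t0).comp hutend
      refine mem_closure_of_tendsto htend (Filter.Eventually.of_forall fun k => ?_)
      exact fun hmem => hnot _ (hupos k) (hule k) hmem
  have hpfr : q t0 ∈ intrinsicFrontier ℝ X := ⟨p', hfront, rfl⟩
  have hge := hfar _ hpfr
  have hd : dist z (q t0) ≤ dist z w := by
    rw [dist_eq_norm, dist_eq_norm]
    have h1 : z - q t0 = (-t0) • (w - z) := by
      simp only [hq]
      module
    have h2 : z - w = -(w - z) := by abel
    rw [h1, h2, norm_smul, Real.norm_eq_abs, abs_neg, norm_neg, abs_of_nonneg ht0S.1.1]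
    nlinarith [norm_nonneg (w - z)]
  linarith

lemma svwe_ball_subset_approx {E : Type*} [NormedAddCommGroup E] [InnerProductSpace ℝ E]
    [FiniteDimensional ℝ E]
    {X Y : Set E} (hXne : X.Nonempty) (hYne : Y.Nonempty) (hYconv : Convex ℝ Y)
    (hYcomp : IsCompact Y) (hXbdd : Bornology.IsBounded X)
    (hspan : affineSpan ℝ X = affineSpan ℝ Y)
    {D : ℝ} (hhaus : Metric.hausdorffDist X Y ≤ D)
    {z : E} (hzaff : z ∈ affineSpan ℝ X) {ρ : ℝ}
    (hball : ∀ w' ∈ affineSpan ℝ X, dist z w' < ρ → w' ∈ X)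
    {w : E} (hw : w ∈ affineSpan ℝ X) (hdist : dist z w < ρ - D) : w ∈ Y := by
  have hD0 : 0 ≤ D := le_trans Metric.hausdorffDist_nonneg hhaus
  by_contra hwY
  obtain ⟨ℓ, c, hℓw, hℓY⟩ := geometric_hahn_banach_point_closed hYconv hYcomp.isClosed hwY
  set u := (InnerProductSpace.toDual ℝ E).symm ℓ with hu
  have huval : ∀ v : E, ⟪u, v⟫ = ℓ v := fun v => by
    rw [hu, InnerProductSpace.toDual_symm_apply]
  set V := (affineSpan ℝ X).direction with hV
  set d : E := -(V.orthogonalProjectionOnto u : E) with hd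
  have hdV : d ∈ V := Submodule.neg_mem _ (SetLike.coe_mem _)
  have hperp : ∀ v ∈ V, ⟪d, v⟫ = -⟪u, v⟫ := by
    intro v hv
    have h0 : ⟪u - (V.orthogonalProjectionOnto u : E), v⟫ = 0 := by
      have := Submodule.sub_starProjection_mem_orthogonal (K := V) u
      exact (Submodule.mem_orthogonal' V _).mp this v hv
    rw [inner_sub_left] at h0
    rw [hd, inner_neg_left]
    linarith
  have hmemV : ∀ y ∈ Y, y - w ∈ V := by
    intro y hy
    have hyaff : y ∈ affineSpan ℝ X := hspan ▸ subset_affineSpan ℝ Y hy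
    exact AffineSubspace.vsub_mem_direction hyaff hw
  have hdyw : ∀ y ∈ Y, ⟪d, y - w⟫ < 0 := by
    intro y hy
    rw [hperp _ (hmemV y hy), huval]
    have h1 := hℓY y hy
    rw [map_sub]
    linarith
  obtain ⟨y0, hy0⟩ := hYne
  have hd0 : d ≠ 0 := by
    intro h0
    have := hdyw y0 hy0
    rw [h0, inner_zero_left] at this
    linarith
  have hdn : (0:ℝ) < ‖d‖ := norm_pos_iff.mpr hd0
  set r : ℝ := (dist z w + D + ρ) / 2 with hr
  have hr1 : dist z w + D < r := by simp only [hr]; linarith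
  have hr2 : r < ρ := by simp only [hr]; linarith
  have hr0 : 0 ≤ r := by
    have := dist_nonneg (x := z) (y := w)
    simp only [hr]; linarith
  set p : E := (r / ‖d‖) • d + z with hp
  have hpaff : p ∈ affineSpan ℝ X :=
    AffineSubspace.vadd_mem_of_mem_direction (Submodule.smul_mem _ _ hdV) hzaff
  have hdistzp : dist z p = r := by
    rw [dist_eq_norm]
    have h1 : z - p = (-(r / ‖d‖)) • d := by simp only [hp]; module
    rw [h1, norm_smul, Real.norm_eq_abs, abs_neg, abs_of_nonneg (by positivity)]
    field_simp
  have hpX : p ∈ X := hball p hpaff (by rw [hdistzp]; exact hr2)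
  have hfin : EMetric.hausdorffEdist X Y ≠ ⊤ :=
    Metric.hausdorffEdist_ne_top_of_nonempty_of_bounded hXne ⟨y0, hy0⟩ hXbdd hYcomp.isBounded
  have hinf : Metric.infDist p Y ≤ D :=
    le_trans (Metric.infDist_le_hausdorffDist_of_mem hpX hfin) hhaus
  obtain ⟨y, hyY, hyd⟩ := hYcomp.exists_infDist_eq_dist ⟨y0, hy0⟩ p
  have hpy : dist p y ≤ D := by rw [← hyd]; exact hinf
  have h1 : ⟪d, p - y⟫ ≤ ‖d‖ * D := by
    calc ⟪d, p - y⟫ ≤ ‖d‖ * ‖p - y‖ := real_inner_le_norm d (p - y)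
      _ ≤ ‖d‖ * D := by
          rw [← dist_eq_norm]
          exact mul_le_mul_of_nonneg_left hpy (le_of_lt hdn)
  have h2 : ⟪d, p⟫ = ⟪d, z⟫ + r * ‖d‖ := by
    simp only [hp]
    rw [inner_add_right, real_inner_smul_right, real_inner_self_eq_norm_sq]
    field_simp
    ring
  have h3 : ⟪d, w⟫ ≤ ⟪d, z⟫ + ‖d‖ * dist z w := by
    have := real_inner_le_norm d (w - z)
    rw [inner_sub_right] at this
    have h4 : ‖w - z‖ = dist z w := by rw [dist_eq_norm, norm_sub_rev]
    nlinarith [this]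
  have h5 := hdyw y hyY
  rw [inner_sub_right] at h5
  rw [inner_sub_right] at h1
  nlinarith [mul_pos hdn (sub_pos.mpr hr1)]

lemma svwe_comb_mem {E : Type*} [NormedAddCommGroup E] [InnerProductSpace ℝ E]
    {S : Set E} (hS : Convex ℝ S) {q ph p : E} {r Dd s : ℝ}
    (hp : p ∈ S) (hpd : ‖ph - p‖ ≤ Dd) (hph : ph ∈ affineSpan ℝ S) (hq : q ∈ S)
    (hball : ∀ w ∈ affineSpan ℝ S, dist q w < r → w ∈ S)
    (hs0 : 0 ≤ s) (hs1 : s ≤ 1)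
    (hcond : (1 - s) * Dd < s * r ∨ (s = 0 ∧ Dd ≤ 0)) :
    (1 - s) • ph + s • q ∈ S := by
  have hDd0 : 0 ≤ Dd := le_trans (norm_nonneg _) hpd
  rcases hcond with hlt | ⟨hs, hD⟩
  · have hspos : 0 < s := by
      rcases hs0.eq_or_lt with h | h
      · exfalso
        rw [← h] at hlt
        simp at hlt
        linarith
      · exact h
    set w' : E := ((1 - s)/s) • (ph - p) + q with hw'
    have hw'aff : w' ∈ affineSpan ℝ S :=
      AffineSubspace.vadd_mem_of_mem_direction
        (Submodule.smul_mem _ _ (AffineSubspace.vsub_mem_direction hph (mem_affineSpan ℝ hp)))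
        (mem_affineSpan ℝ hq)
    have hd : dist q w' < r := by
      rw [dist_comm, dist_eq_norm]
      have h1 : w' - q = ((1-s)/s) • (ph - p) := by
        simp [hw']
      rw [h1, norm_smul, Real.norm_eq_abs, abs_of_nonneg (div_nonneg (by linarith) hspos.le)]
      rw [div_mul_eq_mul_div, div_lt_iff₀ hspos]
      calc (1-s) * ‖ph - p‖ ≤ (1-s)*Dd := mul_le_mul_of_nonneg_left hpd (by linarith)
        _ < s * r := hlt
        _ = r * s := mul_comm _ _
    have hw'S : w' ∈ S := hball w' hw'aff hd
    have hcomb : (1-s) • p + s • w' ∈ S :=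
      hS hp hw'S (by linarith) hs0 (by ring)
    have hss : s • (((1 - s)/s) • (ph - p)) = (1-s) • (ph - p) := by
      rw [smul_smul]
      congr 1
      field_simp
    have heq : (1 - s) • p + s • w' = (1 - s) • ph + s • q := by
      simp only [hw', smul_add, hss]
      module
    rw [← heq]
    exact hcomb
  · subst hs
    have hphp : ph = p := by
      have h0 : ‖ph - p‖ = 0 := le_antisymm (le_trans hpd hD) (norm_nonneg _)
      rwa [norm_eq_zero, sub_eq_zero] at h0
    simp [hphp, hp]

lemma svwe_subdiff_norm_le {E : Type*} [NormedAddCommGroup E] [InnerProductSpace ℝ E]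
    {φ : E → ℝ} {L : ℝ} (hL : 0 ≤ L) (hLip : ∀ u u', |φ u - φ u'| ≤ L * ‖u - u'‖)
    {x g : E} (hg : g ∈ subdiff φ x) : ‖g‖ ≤ L := by
  have h := hg (x + g)
  rw [add_sub_cancel_left, real_inner_self_eq_norm_sq] at h
  have h2 : φ (x + g) - φ x ≤ L * ‖g‖ := by
    have := (abs_le.mp (hLip (x + g) x)).2
    rwa [add_sub_cancel_left] at this
  nlinarith [norm_nonneg g]

lemma svwe_isClosed_subdiff {E : Type*} [NormedAddCommGroup E] [InnerProductSpace ℝ E]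
    (φ : E → ℝ) (x : E) : IsClosed (subdiff φ x) := by
  have : subdiff φ x = ⋂ y, {g | φ x + ⟪g, y - x⟫ ≤ φ y} := by
    ext g; simp [subdiff, Set.mem_iInter]
  rw [this]
  exact isClosed_iInter fun y =>
    isClosed_le (continuous_const.add (continuous_id.inner continuous_const)) continuous_const

lemma svwe_subdiff_nonempty {E : Type*} [NormedAddCommGroup E] [InnerProductSpace ℝ E]
    [CompleteSpace E] {φ : E → ℝ} (hconv : ConvexOn ℝ Set.univ φ) (hcont : Continuous φ)
    (x : E) : (subdiff φ x).Nonempty := by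
  set S : Set (E × ℝ) := {p | φ p.1 < p.2} with hS
  have hSopen : IsOpen S := isOpen_lt (hcont.comp continuous_fst) continuous_snd
  have hSconv : Convex ℝ S := by
    rintro ⟨y1, t1⟩ h1 ⟨y2, t2⟩ h2 a b ha hb hab
    simp only [hS, Set.mem_setOf_eq] at h1 h2 ⊢
    have hcv := hconv.2 (Set.mem_univ y1) (Set.mem_univ y2) ha hb hab
    simp only [smul_eq_mul] at hcv
    have h1' : a * φ y1 ≤ a * t1 := mul_le_mul_of_nonneg_left h1.le ha
    have h2' : b * φ y2 ≤ b * t2 := mul_le_mul_of_nonneg_left h2.le hb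
    rcases ha.eq_or_lt with rfl | ha'
    · have hb1 : b = 1 := by linarith
      subst hb1
      simpa using h2
    · have : a * φ y1 < a * t1 := by exact (mul_lt_mul_iff_right₀ ha').mpr h1
      calc φ (a • (y1, t1) + b • (y2, t2)).1 = φ (a • y1 + b • y2) := rfl
        _ ≤ a * φ y1 + b * φ y2 := hcv
        _ < a * t1 + b * t2 := by linarith
        _ = (a • (y1, t1) + b • (y2, t2)).2 := by simp
  have hx : ((x, φ x) : E × ℝ) ∉ S := by simp [hS]
  obtain ⟨ℓ, hℓ⟩ := geometric_hahn_banach_open_point hSconv hSopen hx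
  set c : ℝ := ℓ (0, 1) with hcdef
  have hdecomp : ∀ (y : E) (t : ℝ), ℓ (y, t) = ℓ (y, 0) + t * c := by
    intro y t
    have h1 : ((y, t) : E × ℝ) = (y, 0) + t • ((0 : E), (1 : ℝ)) := by
      simp [Prod.ext_iff]
    rw [h1, map_add, map_smul, smul_eq_mul, hcdef]
  have hc : c < 0 := by
    have h1 := hℓ (x, φ x + 1) (by simp [hS])
    rw [hdecomp x (φ x + 1), hdecomp x (φ x)] at h1
    nlinarith
  have key : ∀ y, ℓ (y, 0) + φ y * c ≤ ℓ (x, 0) + φ x * c := by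
    intro y
    by_contra hcon
    push_neg at hcon
    set δ := ℓ (y, 0) + φ y * c - (ℓ (x, 0) + φ x * c) with hδ
    have hδpos : 0 < δ := by linarith
    have hcpos : (0 : ℝ) < -c := by linarith
    have hcne : c ≠ 0 := by linarith
    have hmem : ((y, φ y + δ / (-c) / 2) : E × ℝ) ∈ S := by
      simp only [hS, Set.mem_setOf_eq]
      have : 0 < δ / (-c) / 2 := by positivity
      linarith
    have h1 := hℓ _ hmem
    rw [hdecomp y (φ y + δ / (-c) / 2), hdecomp x (φ x)] at h1
    have h2 : (φ y + δ / (-c) / 2) * c = φ y * c - δ / 2 := by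
      field_simp
      ring
    nlinarith
  set ψ : E →L[ℝ] ℝ := ℓ.comp (ContinuousLinearMap.inl ℝ E ℝ) with hψ
  have hψval : ∀ y : E, ψ y = ℓ (y, 0) := by
    intro y
    simp [hψ]
  set w := (InnerProductSpace.toDual ℝ E).symm ψ with hw
  have hwval : ∀ y : E, ⟪w, y⟫ = ℓ (y, 0) := by
    intro y
    rw [hw, InnerProductSpace.toDual_symm_apply]
    exact hψval y
  refine ⟨(-c)⁻¹ • w, fun y => ?_⟩
  have hcpos : (0 : ℝ) < -c := by linarith
  rw [real_inner_smul_left, inner_sub_right, hwval, hwval]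
  have h3 : (-c)⁻¹ * (ℓ (y, 0) - ℓ (x, 0)) ≤ φ y - φ x := by
    rw [inv_mul_le_iff₀ hcpos]
    nlinarith [key y]
  linarith

lemma svwe_sum_clCard {N : ℕ} {I : Type*} [Fintype I] [DecidableEq I] (cl : Fin N → I) :
    ∑ i, clCard cl i = N := by
  have h := Finset.card_eq_sum_card_fiberwise
    (f := cl) (s := (Finset.univ : Finset (Fin N))) (t := Finset.univ)
    (fun x _ => Finset.mem_univ _)
  rw [Finset.card_univ, Fintype.card_fin] at h
  simpa [clCard] using h.symm

lemma svwe_norm_wavg_le {T : ℕ} {ι : Type*} (s : Finset ι) (x : ι → Vec T)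
    {R c : ℝ} (hx : ∀ i ∈ s, ‖x i‖ ≤ R) (hc : 0 < c) (hcard : ((s.card : ℕ) : ℝ) = c) :
    ‖c⁻¹ • ∑ i ∈ s, x i‖ ≤ R := by
  rw [norm_smul, Real.norm_eq_abs, abs_of_nonneg (inv_nonneg.mpr hc.le)]
  have h1 : ‖∑ i ∈ s, x i‖ ≤ ∑ i ∈ s, ‖x i‖ := norm_sum_le _ _
  have h2 : ∑ i ∈ s, ‖x i‖ ≤ ∑ _i ∈ s, R := Finset.sum_le_sum hx
  rw [Finset.sum_const, nsmul_eq_mul, hcard] at h2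
  calc c⁻¹ * ‖∑ i ∈ s, x i‖ ≤ c⁻¹ * (c * R) :=
        mul_le_mul_of_nonneg_left (le_trans h1 h2) (inv_nonneg.mpr hc.le)
    _ = R := by field_simp

set_option maxHeartbeats 1000000 in
/-- averaged bounds between the SVWE of the auxiliary population game and
the SVWE of the original population game, under strong monotonicity. -/
theorem aux_svwe_close_to_svwe_avg (N T : ℕ) (hN : 0 < N) (hT : 0 < T) (R : ℝ) (hR : 0 < R)
    (f : Fin N → Vec T → Vec T → ℝ)
    (hfconv : ∀ n v, ConvexOn ℝ Set.univ (fun u => f n u v))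
    (Xset : Fin N → Set (Vec T))
    (hXne : ∀ n, (Xset n).Nonempty) (hXconv : ∀ n, Convex ℝ (Xset n))
    (hXcomp : ∀ n, IsCompact (Xset n)) (hXbd : ∀ n, ∀ x ∈ Xset n, ‖x‖ ≤ R)
    (A : Set (Vec T)) (hAne : A.Nonempty) (hAcl : IsClosed A) (hAconv : Convex ℝ A)
    (I : Type) [Fintype I] [DecidableEq I] (cl : Fin N → I) (hcl : Function.Surjective cl)
    (Yset : I → Set (Vec T))
    (hYne : ∀ i, (Yset i).Nonempty) (hYconv : ∀ i, Convex ℝ (Yset i))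
    (hYcomp : ∀ i, IsCompact (Yset i)) (hYbd : ∀ i, ∀ y ∈ Yset i, ‖y‖ ≤ R)
    (F : I → Vec T → Vec T → ℝ)
    (hFconv : ∀ i v, ConvexOn ℝ Set.univ (fun u => F i u v))
    (D Df : ℝ)
    (hspan : ∀ n, affineSpan ℝ (Xset n) = affineSpan ℝ (Yset (cl n)))
    (hhaus : ∀ n, Metric.hausdorffDist (Xset n) (Yset (cl n)) ≤ D)
    (hsubgrad : ∀ n, ∀ u ∈ Yset (cl n), ∀ v : Vec T, ‖v‖ ≤ R →
      Metric.hausdorffDist (subdiff (fun y => F (cl n) y v) u)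
        (subdiff (fun y => f n y v) u) ≤ Df)
    (ρ : ℝ) (hρ : 0 < ρ) (z : Profile N T) (hz : z ∈ XA Xset A)
    (hzint : ∀ n, ∀ w ∈ intrinsicFrontier ℝ (Xset n), ρ ≤ dist (z n) w)
    (hDρ : D < ρ / 2)
    (L₁ : ℝ) (hL₁ : 0 < L₁)
    (hfLip : ∀ n (v : Vec T), ‖v‖ ≤ R → ∀ u u', |f n u v - f n u' v| ≤ L₁ * ‖u - u'‖)
    (hFbound : ∀ i, ∀ u ∈ Yset i, ∀ v : Vec T, ‖v‖ ≤ R →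
      ∀ h ∈ subdiff (fun y => F i y v) u, ‖h‖ ≤ L₁)
    (α : ℝ) (hα : 0 < α)
    (hmono : ∀ x y : Profile N T, (∀ n, ‖x n‖ ≤ R) → (∀ n, ‖y n‖ ≤ R) →
      ∀ g ∈ Phi f x, ∀ h ∈ Phi f y, α * ‖x - y‖ ^ 2 ≤ ⟪g - h, x - y⟫)
    (xI : I → Vec T) (hxI : xI ∈ XIA cl Yset A)
    (hI : I → Vec T)
    (hhI : ∀ i, hI i ∈ subdiff (fun u => F i u (avgI cl xI)) (xI i))
    (hSVWEI : ∀ y ∈ XIA cl Yset A, 0 ≤ ∑ i, (clCard cl i : ℝ) * ⟪hI i, y i - xI i⟫)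
    (xstar : Profile N T) (hxstar : xstar ∈ XA Xset A)
    (gstar : Profile N T) (hgstar : gstar ∈ Phi f xstar)
    (hSVWE : ∀ x ∈ XA Xset A, 0 ≤ ⟪gstar, x - xstar⟫)
    (K : ℝ) (hK : K = 2 * R * (3 * L₁ * D / ρ + Df)) :
    (1 / (N : ℝ)) * ∑ n, ‖psiMap cl xI n - xstar n‖ ≤ Real.sqrt (K / α) ∧
      ‖avgI cl xI - avg xstar‖ ≤ Real.sqrt (K / α) := by
  classical
  have hNR : (0:ℝ) < N := by exact_mod_cast hN
  have hD0 : 0 ≤ D := le_trans Metric.hausdorffDist_nonneg (hhaus ⟨0, hN⟩)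
  have hρD : 0 < ρ - D := by linarith
  set xhat : Profile N T := psiMap cl xI with hxhatdef
  have hxhatapp : ∀ n, xhat n = xI (cl n) := fun n => rfl
  have hxhatmem : ∀ n, xhat n ∈ Yset (cl n) := fun n => hxI.1 (cl n)
  have hkpos : ∀ i, 0 < clCard cl i := by
    intro i
    obtain ⟨n, hn⟩ := hcl i
    exact Finset.card_pos.mpr ⟨n, Finset.mem_filter.mpr ⟨Finset.mem_univ n, hn⟩⟩
  have hkRpos : ∀ i, (0:ℝ) < (clCard cl i : ℝ) := fun i => by exact_mod_cast hkpos i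
  have hkne : ∀ i, (clCard cl i : ℝ) ≠ 0 := fun i => (hkRpos i).ne'
  have hsumk : ∑ i, (clCard cl i : ℝ) = (N : ℝ) := by
    rw [← Nat.cast_sum, svwe_sum_clCard cl]
  have hregroup : ∀ (G : Fin N → Vec T), ∑ n, G n
      = ∑ i, ∑ n ∈ Finset.univ.filter (fun n => cl n = i), G n :=
    fun G => (Finset.sum_fiberwise_of_maps_to (fun n _ => Finset.mem_univ (cl n)) G).symm
  have hregroupR : ∀ (G : Fin N → ℝ), ∑ n, G n
      = ∑ i, ∑ n ∈ Finset.univ.filter (fun n => cl n = i), G n :=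
    fun G => (Finset.sum_fiberwise_of_maps_to (fun n _ => Finset.mem_univ (cl n)) G).symm
  have hvbar : avg xhat = avgI cl xI := by
    rw [avg, avgI]
    congr 1
    rw [hregroup (fun n => xhat n)]
    refine Finset.sum_congr rfl fun i _ => ?_
    rw [Finset.sum_congr rfl (fun n hn => by
      rw [hxhatapp n, (Finset.mem_filter.mp hn).2] : ∀ n ∈ _, xhat n = xI i),
      Finset.sum_const, Nat.cast_smul_eq_nsmul]
    rfl
  have hvR : ‖avgI cl xI‖ ≤ R := by
    rw [avgI]
    have h1 : ‖∑ i, (clCard cl i : ℝ) • xI i‖ ≤ ∑ i, (clCard cl i : ℝ) * R := by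
      refine le_trans (norm_sum_le _ _) (Finset.sum_le_sum fun i _ => ?_)
      rw [norm_smul, Real.norm_eq_abs, abs_of_nonneg (hkRpos i).le]
      exact mul_le_mul_of_nonneg_left (hYbd i _ (hxI.1 i)) (hkRpos i).le
    rw [← Finset.sum_mul, hsumk] at h1
    rw [norm_smul, Real.norm_eq_abs, abs_of_nonneg (by positivity : (0:ℝ) ≤ 1/(N:ℝ))]
    calc 1/(N:ℝ) * ‖∑ i, (clCard cl i:ℝ) • xI i‖ ≤ 1/(N:ℝ) * ((N:ℝ)*R) :=
          mul_le_mul_of_nonneg_left h1 (by positivity)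
      _ = R := by field_simp
  have hDf0 : 0 ≤ Df :=
    le_trans Metric.hausdorffDist_nonneg (hsubgrad ⟨0,hN⟩ _ (hxI.1 _) _ hvR)
  have hK0 : 0 ≤ K := by
    rw [hK]
    have : 0 ≤ 3 * L₁ * D / ρ := by positivity
    nlinarith
  have hxhatR : ∀ n, ‖xhat n‖ ≤ R := fun n => hYbd (cl n) _ (hxhatmem n)
  have hxstarR : ∀ n, ‖xstar n‖ ≤ R := fun n => hXbd n _ (hxstar.1 n)
  have hzR : ∀ n, ‖z n‖ ≤ R := fun n => hXbd n _ (hz.1 n)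
  have havgstarR : ‖avg xstar‖ ≤ R := by
    rw [avg]
    have h1 : ‖∑ n, xstar n‖ ≤ ∑ _n : Fin N, R :=
      le_trans (norm_sum_le _ _) (Finset.sum_le_sum fun n _ => hxstarR n)
    rw [Finset.sum_const, Finset.card_univ, Fintype.card_fin, nsmul_eq_mul] at h1
    rw [norm_smul, Real.norm_eq_abs, abs_of_nonneg (by positivity : (0:ℝ) ≤ 1/(N:ℝ))]
    calc 1/(N:ℝ) * ‖∑ n, xstar n‖ ≤ 1/(N:ℝ) * ((N:ℝ)*R) :=
          mul_le_mul_of_nonneg_left h1 (by positivity)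
      _ = R := by field_simp
  -- hausdorff finiteness between Xset n and Yset (cl n)
  have hfinXY : ∀ n, EMetric.hausdorffEdist (Xset n) (Yset (cl n)) ≠ ⊤ := fun n =>
    Metric.hausdorffEdist_ne_top_of_nonempty_of_bounded (hXne n) (hYne (cl n))
      (hXcomp n).isBounded (hYcomp (cl n)).isBounded
  -- construction of a selection g of Φ(x̂) close to hI
  have hgex : ∀ n, ∃ gn : Vec T, gn ∈ subdiff (fun y => f n y (avgI cl xI)) (xI (cl n)) ∧
      ‖gn - hI (cl n)‖ ≤ Df := by
    intro n
    have hlip := hfLip n _ hvR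
    have hlw : LipschitzWith ⟨L₁, hL₁.le⟩ (fun y => f n y (avgI cl xI)) := by
      apply LipschitzWith.of_dist_le_mul
      intro a b
      rw [Real.dist_eq, dist_eq_norm]
      exact hlip a b
    have hSfne := svwe_subdiff_nonempty (hfconv n _) hlw.continuous (xI (cl n))
    have hSfcl := svwe_isClosed_subdiff (fun y => f n y (avgI cl xI)) (xI (cl n))
    have hSfbd : Bornology.IsBounded (subdiff (fun y => f n y (avgI cl xI)) (xI (cl n))) := by
      apply (Metric.isBounded_closedBall (x := (0:Vec T)) (r := L₁)).subset
      intro gg hgg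
      rw [Metric.mem_closedBall, dist_zero_right]
      exact svwe_subdiff_norm_le hL₁.le hlip hgg
    have hSFne : (subdiff (fun y => F (cl n) y (avgI cl xI)) (xI (cl n))).Nonempty :=
      ⟨hI (cl n), hhI (cl n)⟩
    have hSFbd : Bornology.IsBounded
        (subdiff (fun y => F (cl n) y (avgI cl xI)) (xI (cl n))) := by
      apply (Metric.isBounded_closedBall (x := (0:Vec T)) (r := L₁)).subset
      intro gg hgg
      rw [Metric.mem_closedBall, dist_zero_right]
      exact hFbound (cl n) _ (hxI.1 (cl n)) _ hvR gg hgg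
    have hfin : EMetric.hausdorffEdist
        (subdiff (fun y => F (cl n) y (avgI cl xI)) (xI (cl n)))
        (subdiff (fun y => f n y (avgI cl xI)) (xI (cl n))) ≠ ⊤ :=
      Metric.hausdorffEdist_ne_top_of_nonempty_of_bounded hSFne hSfne hSFbd hSfbd
    have hinf : Metric.infDist (hI (cl n))
        (subdiff (fun y => f n y (avgI cl xI)) (xI (cl n))) ≤ Df :=
      le_trans (Metric.infDist_le_hausdorffDist_of_mem (hhI (cl n)) hfin)
        (hsubgrad n _ (hxI.1 (cl n)) _ hvR)
    have hSfcomp := Metric.isCompact_of_isClosed_isBounded hSfcl hSfbd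
    obtain ⟨gn, hgn1, hgn2⟩ := hSfcomp.exists_infDist_eq_dist hSfne (hI (cl n))
    refine ⟨gn, hgn1, ?_⟩
    rw [hgn2] at hinf
    rw [dist_comm, dist_eq_norm] at hinf
    exact hinf
  choose g hg1 hg2 using hgex
  have hgPhi : (WithLp.toLp 2 g : Profile N T) ∈ Phi f xhat := by
    intro n
    rw [hvbar]
    exact hg1 n
  have hgstar' : ∀ n, gstar n ∈ subdiff (fun y => f n y (avg xstar)) (xstar n) := hgstar
  have hsm := hmono xhat xstar hxhatR hxstarR (WithLp.toLp 2 g) hgPhi gstar hgstar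
  -- x̂' construction
  set sX : ℝ := D / ρ with hsXdef
  have hsX0 : 0 ≤ sX := by positivity
  have hsX1 : sX ≤ 1 := by
    rw [hsXdef, div_le_one hρ]; linarith
  set xhat' : Profile N T := WithLp.toLp 2 (fun n => (1 - sX) • xhat n + sX • z n) with hxhat'def
  have hxhat'mem : ∀ n, xhat' n ∈ Xset n := by
    intro n
    have hinf : Metric.infDist (xhat n) (Xset n) ≤ D := by
      have h1 : Metric.infDist (xhat n) (Xset n)
          ≤ Metric.hausdorffDist (Yset (cl n)) (Xset n) :=
        Metric.infDist_le_hausdorffDist_of_mem (hxhatmem n)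
          (by rw [EMetric.hausdorffEdist_comm] at *; exact hfinXY n)
      rw [Metric.hausdorffDist_comm] at h1
      exact le_trans h1 (hhaus n)
    obtain ⟨p, hpX, hpd⟩ := (hXcomp n).exists_infDist_eq_dist (hXne n) (xhat n)
    have hpd' : ‖xhat n - p‖ ≤ D := by
      rw [hpd, dist_eq_norm] at hinf
      exact hinf
    refine svwe_comb_mem (r := ρ) (hXconv n) hpX hpd' ?_ (hz.1 n) ?_ hsX0 hsX1 ?_
    · rw [hspan n]
      exact subset_affineSpan ℝ _ (hxhatmem n)
    · exact fun w hw hd =>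
        svwe_ball_subset_of_intrinsicFrontier (hXcomp n).isClosed (hz.1 n) (hzint n) hw hd
    · rcases hD0.eq_or_lt with h | h
      · right
        constructor
        · rw [hsXdef, ← h]; simp
        · rw [← h]
      · left
        have hid : sX * ρ - (1 - sX)*D = D^2/ρ := by
          rw [hsXdef]; field_simp; ring
        have : 0 < D^2/ρ := by positivity
        linarith
  have havgxhat' : avg xhat' = (1 - sX) • avg xhat + sX • avg z := by
    rw [avg, avg, avg]
    rw [show (∑ n, xhat' n) = (1 - sX) • (∑ n, xhat n) + sX • (∑ n, z n) by
      rw [Finset.smul_sum, Finset.smul_sum, ← Finset.sum_add_distrib]]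
    rw [smul_add, smul_comm ((1:ℝ)/(N:ℝ)) (1 - sX), smul_comm ((1:ℝ)/(N:ℝ)) sX]
  have hxhat'XA : xhat' ∈ XA Xset A := by
    refine ⟨hxhat'mem, ?_⟩
    rw [havgxhat', hvbar]
    exact hAconv hxI.2 hz.2 (by linarith) hsX0 (by ring)
  have hVI2 := hSVWE xhat' hxhat'XA
  -- population side: yb, zb, y'
  set fib : I → Finset (Fin N) := fun i => Finset.univ.filter (fun n => cl n = i) with hfibdef
  have hfibcl : ∀ i, ∀ n ∈ fib i, cl n = i := fun i n hn => (Finset.mem_filter.mp hn).2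
  have hfibcard : ∀ i, ((fib i).card : ℝ) = (clCard cl i : ℝ) := fun i => rfl
  set yb : I → Vec T := fun i => ((clCard cl i : ℝ))⁻¹ • ∑ n ∈ fib i, xstar n with hybdef
  set zb : I → Vec T := fun i => ((clCard cl i : ℝ))⁻¹ • ∑ n ∈ fib i, z n with hzbdef
  have haffavg : ∀ (i : I) (x : Fin N → Vec T), (∀ n, cl n = i → x n ∈ affineSpan ℝ (Yset i)) →
      ((clCard cl i : ℝ))⁻¹ • ∑ n ∈ fib i, x n ∈ affineSpan ℝ (Yset i) := by
    intro i x hx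
    obtain ⟨n0, hn0⟩ := hcl i
    have hn0m : x n0 ∈ affineSpan ℝ (Yset i) := hx n0 hn0
    have heq : ((clCard cl i : ℝ))⁻¹ • ∑ n ∈ fib i, x n - x n0
        = ((clCard cl i : ℝ))⁻¹ • ∑ n ∈ fib i, (x n - x n0) := by
      rw [Finset.sum_sub_distrib, smul_sub, Finset.sum_const, ← Nat.cast_smul_eq_nsmul ℝ,
        hfibcard i, smul_smul, inv_mul_cancel₀ (hkne i), one_smul]
    have hdir : ((clCard cl i : ℝ))⁻¹ • ∑ n ∈ fib i, x n - x n0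
        ∈ (affineSpan ℝ (Yset i)).direction := by
      rw [heq]
      exact Submodule.smul_mem _ _ (Submodule.sum_mem _ (fun n hn =>
        AffineSubspace.vsub_mem_direction (hx n (hfibcl i n hn)) hn0m))
    have := AffineSubspace.vadd_mem_of_mem_direction hdir hn0m
    simpa using this
  have hzbaff : ∀ i, zb i ∈ affineSpan ℝ (Yset i) := fun i =>
    haffavg i z (fun n hn => by rw [← hn, ← hspan n]; exact mem_affineSpan ℝ (hz.1 n))
  have hybaff : ∀ i, yb i ∈ affineSpan ℝ (Yset i) := fun i =>
    haffavg i xstar (fun n hn => by rw [← hn, ← hspan n]; exact mem_affineSpan ℝ (hxstar.1 n))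
  have hzbball : ∀ i, ∀ w ∈ affineSpan ℝ (Yset i), dist (zb i) w < ρ - D → w ∈ Yset i := by
    intro i w hw hd
    have hdd : w - zb i ∈ (affineSpan ℝ (Yset i)).direction :=
      AffineSubspace.vsub_mem_direction hw (hzbaff i)
    have hmem : ∀ n ∈ fib i, (w - zb i) + z n ∈ Yset i := by
      intro n hn
      have hcln := hfibcl i n hn
      have hzaffn : z n ∈ affineSpan ℝ (Xset n) := mem_affineSpan ℝ (hz.1 n)
      have hwmem : (w - zb i) + z n ∈ affineSpan ℝ (Xset n) := by
        rw [hspan n, hcln]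
        exact AffineSubspace.vadd_mem_of_mem_direction hdd
          (by rw [← hcln, ← hspan n]; exact hzaffn)
      have hdist2 : dist (z n) ((w - zb i) + z n) < ρ - D := by
        rw [dist_eq_norm]
        have : z n - ((w - zb i) + z n) = -(w - zb i) := by abel
        rw [this, norm_neg]
        rw [dist_eq_norm, norm_sub_rev] at hd
        exact hd
      have happ := svwe_ball_subset_approx (hXne n) (hYne (cl n)) (hYconv (cl n))
        (hYcomp (cl n)) (hXcomp n).isBounded (hspan n) (hhaus n) hzaffn
        (fun w' hw' hd' =>
          svwe_ball_subset_of_intrinsicFrontier (hXcomp n).isClosed (hz.1 n) (hzint n) hw' hd')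
        hwmem hdist2
      rw [hcln] at happ
      exact happ
    have hw_eq : w = ∑ n ∈ fib i, ((clCard cl i : ℝ))⁻¹ • ((w - zb i) + z n) := by
      rw [← Finset.smul_sum, Finset.sum_add_distrib, Finset.sum_const,
        ← Nat.cast_smul_eq_nsmul ℝ, hfibcard i, smul_add, smul_smul,
        inv_mul_cancel₀ (hkne i), one_smul]
      rw [hzbdef]
      abel
    rw [hw_eq]
    exact (hYconv i).sum_mem (fun n hn => inv_nonneg.mpr (hkRpos i).le)
      (by rw [Finset.sum_const, nsmul_eq_mul, hfibcard i, mul_inv_cancel₀ (hkne i)]) hmem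
  have hzbY : ∀ i, zb i ∈ Yset i := fun i =>
    hzbball i (zb i) (hzbaff i) (by rw [dist_self]; linarith)
  have hybnear : ∀ i, ∃ p ∈ Yset i, ‖yb i - p‖ ≤ D := by
    intro i
    have hpn : ∀ n : Fin N, ∃ p ∈ Yset (cl n), ‖xstar n - p‖ ≤ D := by
      intro n
      have hinf : Metric.infDist (xstar n) (Yset (cl n)) ≤ D :=
        le_trans (Metric.infDist_le_hausdorffDist_of_mem (hxstar.1 n) (hfinXY n)) (hhaus n)
      obtain ⟨p, hp1, hp2⟩ := (hYcomp (cl n)).exists_infDist_eq_dist (hYne (cl n)) (xstar n)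
      refine ⟨p, hp1, ?_⟩
      rw [hp2, dist_eq_norm] at hinf
      exact hinf
    choose pf hpf1 hpf2 using hpn
    refine ⟨((clCard cl i : ℝ))⁻¹ • ∑ n ∈ fib i, pf n, ?_, ?_⟩
    · rw [Finset.smul_sum]
      refine (hYconv i).sum_mem (fun n hn => inv_nonneg.mpr (hkRpos i).le)
        (by rw [Finset.sum_const, nsmul_eq_mul, hfibcard i, mul_inv_cancel₀ (hkne i)]) ?_
      intro n hn
      rw [← hfibcl i n hn]
      exact hpf1 n
    · have heq : yb i - ((clCard cl i : ℝ))⁻¹ • ∑ n ∈ fib i, pf n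
          = ((clCard cl i : ℝ))⁻¹ • ∑ n ∈ fib i, (xstar n - pf n) := by
        rw [hybdef, Finset.sum_sub_distrib, smul_sub]
      rw [heq, norm_smul, Real.norm_eq_abs, abs_of_nonneg (inv_nonneg.mpr (hkRpos i).le)]
      have h1 : ‖∑ n ∈ fib i, (xstar n - pf n)‖ ≤ ∑ n ∈ fib i, D :=
        le_trans (norm_sum_le _ _) (Finset.sum_le_sum fun n _ => hpf2 n)
      rw [Finset.sum_const, nsmul_eq_mul, hfibcard i] at h1
      calc ((clCard cl i : ℝ))⁻¹ * ‖∑ n ∈ fib i, (xstar n - pf n)‖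
          ≤ ((clCard cl i : ℝ))⁻¹ * ((clCard cl i : ℝ) * D) :=
            mul_le_mul_of_nonneg_left h1 (inv_nonneg.mpr (hkRpos i).le)
        _ = D := inv_mul_cancel_left₀ (hkne i) D
  set sY : ℝ := 2 * D / ρ with hsYdef
  have hsY0 : 0 ≤ sY := by positivity
  have hsY1 : sY ≤ 1 := by
    rw [hsYdef, div_le_one hρ]; linarith
  set y' : I → Vec T := fun i => (1 - sY) • yb i + sY • zb i with hy'def
  have hy'mem : ∀ i, y' i ∈ Yset i := by
    intro i
    obtain ⟨p, hp1, hp2⟩ := hybnear i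
    refine svwe_comb_mem (r := ρ - D) (hYconv i) hp1 hp2 (hybaff i) (hzbY i) (hzbball i) hsY0 hsY1 ?_
    rcases hD0.eq_or_lt with h | h
    · right
      constructor
      · rw [hsYdef, ← h]; simp
      · rw [← h]
    · left
      have hid : sY * (ρ - D) - (1 - sY)*D = D := by
        rw [hsYdef]; field_simp; ring
      linarith
  have havgIxb : ∀ (x : Fin N → Vec T),
      ∑ i, (clCard cl i : ℝ) • (((clCard cl i : ℝ))⁻¹ • ∑ n ∈ fib i, x n) = ∑ n, x n := by
    intro x
    rw [hregroup x]
    refine Finset.sum_congr rfl fun i _ => ?_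
    rw [smul_smul, mul_inv_cancel₀ (hkne i), one_smul]
  have havgIyb : avgI cl yb = avg xstar := by
    rw [avgI, avg]
    congr 1
    exact havgIxb xstar
  have havgIzb : avgI cl zb = avg z := by
    rw [avgI, avg]
    congr 1
    exact havgIxb z
  have havgIy' : avgI cl y' = (1 - sY) • avg xstar + sY • avg z := by
    rw [← havgIyb, ← havgIzb, avgI, avgI, avgI]
    rw [show (∑ i, (clCard cl i : ℝ) • y' i)
        = (1 - sY) • (∑ i, (clCard cl i : ℝ) • yb i) + sY • (∑ i, (clCard cl i : ℝ) • zb i) by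
      rw [Finset.smul_sum, Finset.smul_sum, ← Finset.sum_add_distrib]
      refine Finset.sum_congr rfl fun i _ => ?_
      rw [hy'def, smul_add, smul_comm (clCard cl i : ℝ) (1 - sY),
        smul_comm (clCard cl i : ℝ) sY]]
    rw [smul_add, smul_comm ((1:ℝ)/(N:ℝ)) (1 - sY), smul_comm ((1:ℝ)/(N:ℝ)) sY]
  have hy'XIA : y' ∈ XIA cl Yset A := by
    refine ⟨hy'mem, ?_⟩
    rw [havgIy']
    exact hAconv hxstar.2 hz.2 (by linarith) hsY0 (by ring)
  have hVI1 := hSVWEI y' hy'XIA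
  -- norm bounds for yb, zb
  have hybR : ∀ i, ‖yb i‖ ≤ R := fun i =>
    svwe_norm_wavg_le (fib i) xstar (fun n _ => hxstarR n) (hkRpos i) (hfibcard i)
  have hzbR : ∀ i, ‖zb i‖ ≤ R := fun i =>
    svwe_norm_wavg_le (fib i) z (fun n _ => hzR n) (hkRpos i) (hfibcard i)
  have hhIR : ∀ i, ‖hI i‖ ≤ L₁ := fun i =>
    hFbound i (xI i) (hxI.1 i) _ hvR (hI i) (hhI i)
  have hgstarR : ∀ n, ‖gstar n‖ ≤ L₁ := fun n =>
    svwe_subdiff_norm_le hL₁.le (hfLip n _ havgstarR) (hgstar' n)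
  -- now the main estimate
  have hsum1 : ∑ n, ⟪g n, xhat n - xstar n⟫
      ≤ (∑ n, ⟪hI (cl n), xhat n - xstar n⟫) + (N:ℝ) * (2*R*Df) := by
    have hB1 : ∀ n, ⟪g n, xhat n - xstar n⟫
        ≤ ⟪hI (cl n), xhat n - xstar n⟫ + 2*R*Df := by
      intro n
      have h1 : ⟪g n - hI (cl n), xhat n - xstar n⟫
          ≤ ‖g n - hI (cl n)‖ * ‖xhat n - xstar n‖ := real_inner_le_norm _ _
      have h2 : ‖xhat n - xstar n‖ ≤ 2 * R := by
        calc ‖xhat n - xstar n‖ ≤ ‖xhat n‖ + ‖xstar n‖ := norm_sub_le _ _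
          _ ≤ 2*R := by linarith [hxhatR n, hxstarR n]
      have h3 : ‖g n - hI (cl n)‖ * ‖xhat n - xstar n‖ ≤ Df * (2*R) :=
        mul_le_mul (hg2 n) h2 (norm_nonneg _) hDf0
      rw [inner_sub_left] at h1
      nlinarith
    calc ∑ n, ⟪g n, xhat n - xstar n⟫
        ≤ ∑ n, (⟪hI (cl n), xhat n - xstar n⟫ + 2*R*Df) :=
          Finset.sum_le_sum (fun n _ => hB1 n)
      _ = (∑ n, ⟪hI (cl n), xhat n - xstar n⟫) + (N:ℝ) * (2*R*Df) := by
          rw [Finset.sum_add_distrib, Finset.sum_const, Finset.card_univ, Fintype.card_fin,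
            nsmul_eq_mul]
  have hsum2 : ∑ n, ⟪hI (cl n), xhat n - xstar n⟫
      = ∑ i, (clCard cl i : ℝ) * ⟪hI i, xI i - yb i⟫ := by
    rw [hregroupR (fun n => ⟪hI (cl n), xhat n - xstar n⟫)]
    refine Finset.sum_congr rfl fun i _ => ?_
    rw [Finset.sum_congr rfl (fun n hn => by
      rw [hxhatapp n, hfibcl i n hn] : ∀ n ∈ _, ⟪hI (cl n), xhat n - xstar n⟫
        = ⟪hI i, xI i - xstar n⟫)]
    rw [show (clCard cl i : ℝ) * ⟪hI i, xI i - yb i⟫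
        = ⟪hI i, (clCard cl i : ℝ) • (xI i - yb i)⟫ by rw [real_inner_smul_right]]
    rw [← inner_sum]
    congr 1
    rw [Finset.sum_sub_distrib, Finset.sum_const, smul_sub]
    congr 1
    · rw [← Nat.cast_smul_eq_nsmul ℝ, hfibcard i]
    · rw [hybdef, smul_smul, mul_inv_cancel₀ (hkne i), one_smul]
  have hsum3 : ∑ i, (clCard cl i : ℝ) * ⟪hI i, xI i - yb i⟫ ≤ (N:ℝ) * (L₁ * (sY * (2*R))) := by
    have hdec : ∀ i, ⟪hI i, xI i - yb i⟫ = ⟪hI i, y' i - yb i⟫ - ⟪hI i, y' i - xI i⟫ := by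
      intro i
      rw [← inner_sub_right]
      congr 1
      abel
    have hcap : ∀ i, ⟪hI i, y' i - yb i⟫ ≤ L₁ * (sY * (2*R)) := by
      intro i
      have h1 : y' i - yb i = sY • (zb i - yb i) := by
        rw [hy'def]
        module
      have h2 : ‖y' i - yb i‖ ≤ sY * (2*R) := by
        rw [h1, norm_smul, Real.norm_eq_abs, abs_of_nonneg hsY0]
        have : ‖zb i - yb i‖ ≤ 2*R := by
          calc ‖zb i - yb i‖ ≤ ‖zb i‖ + ‖yb i‖ := norm_sub_le _ _
            _ ≤ 2*R := by linarith [hzbR i, hybR i]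
        exact mul_le_mul_of_nonneg_left this hsY0
      calc ⟪hI i, y' i - yb i⟫ ≤ ‖hI i‖ * ‖y' i - yb i‖ := real_inner_le_norm _ _
        _ ≤ L₁ * (sY * (2*R)) := by
            apply mul_le_mul (hhIR i) h2 (norm_nonneg _) hL₁.le
    calc ∑ i, (clCard cl i : ℝ) * ⟪hI i, xI i - yb i⟫
        = (∑ i, (clCard cl i : ℝ) * ⟪hI i, y' i - yb i⟫)
          - ∑ i, (clCard cl i : ℝ) * ⟪hI i, y' i - xI i⟫ := by
          rw [← Finset.sum_sub_distrib]
          refine Finset.sum_congr rfl fun i _ => ?_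
          rw [hdec i]
          ring
      _ ≤ ∑ i, (clCard cl i : ℝ) * ⟪hI i, y' i - yb i⟫ := by linarith [hVI1]
      _ ≤ ∑ i, (clCard cl i : ℝ) * (L₁ * (sY * (2*R))) :=
          Finset.sum_le_sum (fun i _ =>
            mul_le_mul_of_nonneg_left (hcap i) (hkRpos i).le)
      _ = (N:ℝ) * (L₁ * (sY * (2*R))) := by
          rw [← Finset.sum_mul, hsumk]
  have hsum4 : ∑ n, ⟪gstar n, xstar n - xhat n⟫ ≤ (N:ℝ) * (L₁ * (sX * (2*R))) := by
    have hsplit : ∀ n, ⟪gstar n, xstar n - xhat n⟫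
        = ⟪gstar n, xstar n - xhat' n⟫ + ⟪gstar n, xhat' n - xhat n⟫ := by
      intro n
      rw [← inner_add_right]
      congr 1
      abel
    have h1 : ∑ n, ⟪gstar n, xstar n - xhat' n⟫ ≤ 0 := by
      have h3 : ⟪gstar, xhat' - xstar⟫ = ∑ n, ⟪gstar n, xhat' n - xstar n⟫ := by
        rw [PiLp.inner_apply]
        refine Finset.sum_congr rfl fun n _ => ?_
        congr 1
      have h4 : ∑ n, ⟪gstar n, xstar n - xhat' n⟫ = -∑ n, ⟪gstar n, xhat' n - xstar n⟫ := by
        rw [← Finset.sum_neg_distrib]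
        refine Finset.sum_congr rfl fun n _ => ?_
        rw [← inner_neg_right]
        congr 1
        abel
      rw [h4]
      rw [h3] at hVI2
      linarith
    have h2 : ∀ n, ⟪gstar n, xhat' n - xhat n⟫ ≤ L₁ * (sX * (2*R)) := by
      intro n
      have ha : xhat' n - xhat n = sX • (z n - xhat n) := by
        rw [hxhat'def]
        module
      have hb : ‖xhat' n - xhat n‖ ≤ sX * (2*R) := by
        rw [ha, norm_smul, Real.norm_eq_abs, abs_of_nonneg hsX0]
        have : ‖z n - xhat n‖ ≤ 2*R := by
          calc ‖z n - xhat n‖ ≤ ‖z n‖ + ‖xhat n‖ := norm_sub_le _ _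
            _ ≤ 2*R := by linarith [hzR n, hxhatR n]
        exact mul_le_mul_of_nonneg_left this hsX0
      calc ⟪gstar n, xhat' n - xhat n⟫ ≤ ‖gstar n‖ * ‖xhat' n - xhat n‖ :=
            real_inner_le_norm _ _
        _ ≤ L₁ * (sX * (2*R)) := mul_le_mul (hgstarR n) hb (norm_nonneg _) hL₁.le
    calc ∑ n, ⟪gstar n, xstar n - xhat n⟫
        = (∑ n, ⟪gstar n, xstar n - xhat' n⟫) + ∑ n, ⟪gstar n, xhat' n - xhat n⟫ := by
          rw [← Finset.sum_add_distrib]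
          exact Finset.sum_congr rfl fun n _ => hsplit n
      _ ≤ 0 + ∑ n, (L₁ * (sX * (2*R))) := by
          have := Finset.sum_le_sum (fun n (_ : n ∈ Finset.univ) => h2 n)
          linarith
      _ = (N:ℝ) * (L₁ * (sX * (2*R))) := by
          rw [zero_add, Finset.sum_const, Finset.card_univ, Fintype.card_fin, nsmul_eq_mul]
  have hsm2 : α * ‖xhat - xstar‖^2
      ≤ ∑ n, (⟪g n, xhat n - xstar n⟫ - ⟪gstar n, xhat n - xstar n⟫) := by
    refine le_trans hsm (le_of_eq ?_)
    rw [PiLp.inner_apply]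
    refine Finset.sum_congr rfl fun n _ => ?_
    show ⟪g n - gstar n, xhat n - xstar n⟫ = _
    rw [inner_sub_left]
  have hflip : ∑ n, ⟪gstar n, xstar n - xhat n⟫ = -∑ n, ⟪gstar n, xhat n - xstar n⟫ := by
    rw [← Finset.sum_neg_distrib]
    refine Finset.sum_congr rfl fun n _ => ?_
    rw [← inner_neg_right]
    congr 1
    abel
  have htotal : α * ‖xhat - xstar‖^2 ≤ (N:ℝ) * K := by
    have hKid : (N:ℝ) * (2*R*Df) + (N:ℝ) * (L₁ * (sY * (2*R)))
        + (N:ℝ) * (L₁ * (sX * (2*R))) = (N:ℝ) * K := by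
      rw [hK, hsXdef, hsYdef]
      field_simp
      ring
    rw [Finset.sum_sub_distrib] at hsm2
    linarith [hsum1, hsum3, hsum4, hsm2, hsum2 ▸ hsum1]
  -- conclusion
  have hnormsq : ‖xhat - xstar‖^2 = ∑ n, ‖xhat n - xstar n‖^2 := by
    rw [PiLp.norm_sq_eq_of_L2]
    exact Finset.sum_congr rfl fun n _ => rfl
  have hsq : ∑ n, ‖xhat n - xstar n‖^2 ≤ (N:ℝ) * K / α := by
    rw [← hnormsq, le_div_iff₀ hα]
    nlinarith
  have hsumn : (∑ n, ‖xhat n - xstar n‖)^2 ≤ (N:ℝ) * ∑ n, ‖xhat n - xstar n‖^2 := by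
    have := Finset.sum_mul_sq_le_sq_mul_sq Finset.univ (fun _ => (1:ℝ))
      (fun n => ‖xhat n - xstar n‖)
    simpa [Finset.card_univ] using this
  have hgoal1 : (1 / (N:ℝ)) * ∑ n, ‖xhat n - xstar n‖ ≤ Real.sqrt (K / α) := by
    have hKα : 0 ≤ K / α := div_nonneg hK0 hα.le
    have hpos : 0 ≤ (1 / (N:ℝ)) * ∑ n, ‖xhat n - xstar n‖ := by
      have : 0 ≤ ∑ n, ‖xhat n - xstar n‖ :=
        Finset.sum_nonneg fun n _ => norm_nonneg _
      positivity
    rw [Real.le_sqrt hpos hKα]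
    have h1 : ((1 / (N:ℝ)) * ∑ n, ‖xhat n - xstar n‖)^2
        = (1/(N:ℝ))^2 * (∑ n, ‖xhat n - xstar n‖)^2 := by ring
    rw [h1]
    have h2 : (∑ n, ‖xhat n - xstar n‖)^2 ≤ (N:ℝ)^2 * (K/α) := by
      calc (∑ n, ‖xhat n - xstar n‖)^2 ≤ (N:ℝ) * ∑ n, ‖xhat n - xstar n‖^2 := hsumn
        _ ≤ (N:ℝ) * ((N:ℝ) * K / α) := mul_le_mul_of_nonneg_left hsq hNR.le
        _ = (N:ℝ)^2 * (K/α) := by ring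
    calc (1/(N:ℝ))^2 * (∑ n, ‖xhat n - xstar n‖)^2
        ≤ (1/(N:ℝ))^2 * ((N:ℝ)^2 * (K/α)) := mul_le_mul_of_nonneg_left h2 (by positivity)
      _ = K/α := by field_simp
  constructor
  · exact hgoal1
  · have heq : avgI cl xI - avg xstar = (1/(N:ℝ)) • ∑ n, (xhat n - xstar n) := by
      rw [← hvbar, avg, avg, ← smul_sub, ← Finset.sum_sub_distrib]
    rw [heq, norm_smul, Real.norm_eq_abs, abs_of_nonneg (by positivity : (0:ℝ) ≤ 1/(N:ℝ))]
    calc (1/(N:ℝ)) * ‖∑ n, (xhat n - xstar n)‖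
        ≤ (1/(N:ℝ)) * ∑ n, ‖xhat n - xstar n‖ :=
          mul_le_mul_of_nonneg_left (norm_sum_le _ _) (by positivity)
      _ ≤ Real.sqrt (K / α) := hgoal1
end
end
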